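/- arXiv:1907.09641 — 15 statements merged into one kernel-verified Lean document; each statement's English description precedes it below -/
import Mathlib

section
/- The set {(α, β) ∈ ℝ² : α ≤ 0, β ≤ 0, and ⌊α⌊βx⌋⌋ ≥ ⌊β⌊αx⌋⌋ for all real x} is a closed subset of ℝ². -/
open Filter Topology

noncomputable def NN (α β : ℝ) (m : ℤ) : ℤ := ⌈β * ((m : ℝ) + 1) / α⌉ - 1

lemma NN_cast (α β : ℝ) (m : ℤ) : ((NN α β m : ℤ) : ℝ) = (⌈β * ((m : ℝ) + 1) / α⌉ : ℝ) - 1 := by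
  simp [NN]

-- achievability of the binding pair (m, NN m)
lemma exists_x_pair (α β : ℝ) (hα : α < 0) (hβ : β < 0) (m : ℤ) :
    ∃ x : ℝ, ⌊α * x⌋ = m ∧ ⌊β * x⌋ = NN α β m := by
  have hαpos : 0 < -α := by linarith
  have hβpos : 0 < -β := by linarith
  obtain ⟨z, hz⟩ : ∃ z : ℝ, z = β * ((m : ℝ) + 1) / α := ⟨_, rfl⟩
  obtain ⟨g, hgdef⟩ : ∃ g : ℝ, g = z - ((⌈z⌉ : ℝ) - 1) := ⟨_, rfl⟩
  have hg : 0 < g := by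
    have := Int.ceil_lt_add_one z
    rw [hgdef]; linarith
  obtain ⟨ε, hε⟩ : ∃ ε : ℝ, ε = min (1 / (2 * (-α))) (g / (2 * (-β))) := ⟨_, rfl⟩
  have hεpos : 0 < ε := by
    rw [hε]; apply lt_min <;> positivity
  have hε1 : ε ≤ 1 / (2 * (-α)) := hε ▸ min_le_left _ _
  have hε2 : ε ≤ g / (2 * (-β)) := hε ▸ min_le_right _ _
  have hαε : -α * ε ≤ 1 / 2 := by
    have h := mul_le_mul_of_nonneg_left hε1 (le_of_lt hαpos)
    have : -α * (1 / (2 * -α)) = 1 / 2 := by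
      rw [mul_one_div, div_eq_div_iff (by positivity) (by norm_num : (2:ℝ) ≠ 0)]; ring
    linarith
  have hβε : -β * ε ≤ g / 2 := by
    have h := mul_le_mul_of_nonneg_left hε2 (le_of_lt hβpos)
    have : -β * (g / (2 * -β)) = g / 2 := by
      rw [mul_comm, div_mul_eq_mul_div, div_eq_div_iff (by positivity) (by norm_num : (2:ℝ) ≠ 0)]; ring
    linarith
  refine ⟨((m : ℝ) + 1) / α + ε, ?_, ?_⟩
  · rw [Int.floor_eq_iff]
    have hα0 : α ≠ 0 := ne_of_lt hα
    have hax : α * (((m : ℝ) + 1) / α + ε) = ((m : ℝ) + 1) + α * ε := by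
      field_simp
    rw [hax]
    constructor
    · nlinarith
    · nlinarith [mul_neg_of_neg_of_pos hα hεpos]
  · rw [Int.floor_eq_iff]
    have hα0 : α ≠ 0 := ne_of_lt hα
    have hbx : β * (((m : ℝ) + 1) / α + ε) = z + β * ε := by
      rw [hz]; field_simp
    rw [hbx, NN_cast]
    have hceil : (z : ℝ) ≤ (⌈z⌉ : ℝ) := Int.le_ceil z
    have hzc : (⌈β * ((m : ℝ) + 1) / α⌉ : ℝ) = (⌈z⌉ : ℝ) := by rw [hz]
    rw [hzc]
    constructor
    · nlinarith
    · nlinarith [mul_neg_of_neg_of_pos hβ hεpos]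

-- any achieved pair satisfies n ≤ NN m
lemma le_NN_of_pair (α β : ℝ) (hα : α < 0) (hβ : β < 0) {x : ℝ} {m n : ℤ}
    (hm : ⌊α * x⌋ = m) (hn : ⌊β * x⌋ = n) : n ≤ NN α β m := by
  have h1 : α * x < (m : ℝ) + 1 := by
    rw [← hm]; push_cast; exact Int.lt_floor_add_one _
  have h2 : (n : ℝ) ≤ β * x := by rw [← hn]; exact Int.floor_le _
  have hx : ((m : ℝ) + 1) / α < x := by
    rw [div_lt_iff_of_neg hα]; linarith [mul_comm α x]
  have h3 : β * x < β * (((m : ℝ) + 1) / α) := by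
    exact (mul_lt_mul_left_of_neg hβ).mpr hx
  have h4 : (n : ℝ) < β * ((m : ℝ) + 1) / α := by
    rw [mul_div_assoc]; linarith
  have : n < ⌈β * ((m : ℝ) + 1) / α⌉ := Int.lt_ceil.mpr h4
  simp only [NN]; omega
-- characterization: the commutator condition is equivalent to the per-m binding family
lemma cond_iff (α β : ℝ) (hα : α < 0) (hβ : β < 0) :
    (∀ x : ℝ, ⌊β * ((⌊α * x⌋ : ℤ) : ℝ)⌋ ≤ ⌊α * ((⌊β * x⌋ : ℤ) : ℝ)⌋) ↔
    (∀ m : ℤ, ((⌊β * (m : ℝ)⌋ : ℤ) : ℝ) ≤ α * ((NN α β m : ℤ) : ℝ)) := by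
  constructor
  · intro h m
    obtain ⟨x, hm, hn⟩ := exists_x_pair α β hα hβ m
    have := h x
    rw [hm, hn] at this
    exact_mod_cast Int.le_floor.mp this
  · intro h x
    set m := ⌊α * x⌋ with hm
    set n := ⌊β * x⌋ with hn
    have h1 : n ≤ NN α β m := le_NN_of_pair α β hα hβ hm.symm hn.symm
    have h2 : α * ((NN α β m : ℤ) : ℝ) ≤ α * (n : ℝ) := by
      apply mul_le_mul_of_nonpos_left _ (le_of_lt hα)
      exact_mod_cast h1
    have h3 : ((⌊β * (m : ℝ)⌋ : ℤ) : ℝ) ≤ α * (n : ℝ) := le_trans (h m) h2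
    exact Int.le_floor.mpr h3
-- Dirichlet approximation in convenient form
lemma dirichlet_approx (θ : ℝ) {η : ℝ} (hη : 0 < η) :
    ∃ l : ℤ, 0 < l ∧ ∃ c : ℤ, |(l : ℝ) * θ - (c : ℝ)| < η := by
  obtain ⟨n, hn⟩ := exists_nat_gt (1 / η)
  have hnpos : 0 < n := by
    by_contra hc
    push_neg at hc
    interval_cases n
    · simp at hn
      exact absurd hn (not_lt.mpr (le_of_lt (by positivity)))
  obtain ⟨j, k, hk0, hkn, hjk⟩ := Real.exists_int_int_abs_mul_sub_le θ hnpos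
  refine ⟨k, hk0, j, lt_of_le_of_lt hjk ?_⟩
  rw [div_lt_iff₀ (by positivity)]
  have h1 : 1 / η < (n : ℝ) := hn
  have h2 : 1 < η * n := by
    rw [div_lt_iff₀ hη] at h1
    linarith [mul_comm η (n : ℝ)]
  nlinarith
-- KEY LEMMA, positive defect version: if the family holds exactly for all m ≤ 0,
-- then it holds at any positive m₀ with β·m₀ ∈ ℤ.
lemma key_pos (α β : ℝ) (hα : α < 0) (hβ : β < 0)
    (hex : ∀ m : ℤ, m ≤ 0 → ((⌊β * (m : ℝ)⌋ : ℤ) : ℝ) ≤ α * ((NN α β m : ℤ) : ℝ))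
    (m₀ : ℤ) (hm₀ : 1 ≤ m₀) (Z : ℤ) (hZ : β * (m₀ : ℝ) = (Z : ℝ)) :
    ((Z : ℤ) : ℝ) ≤ α * ((NN α β m₀ : ℤ) : ℝ) := by
  by_contra hcon
  push_neg at hcon
  have hα0 : α ≠ 0 := ne_of_lt hα
  set γ : ℝ := β / α with hγ
  have hγpos : 0 < γ := by
    rw [hγ, ← neg_div_neg_eq]
    exact div_pos (by linarith) (by linarith)
  -- γ ≤ 1 from instance at m = 0
  have hNN0 : NN α β 0 = ⌈γ⌉ - 1 := by
    simp only [NN, hγ]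
    norm_num
  have hγle1 : γ ≤ 1 := by
    have h0 := hex 0 le_rfl
    norm_num at h0
    rw [hNN0] at h0
    have hle : ((⌈γ⌉ : ℝ) - 1) ≤ 0 := by
      by_contra hgt
      push_neg at hgt
      have : α * ((⌈γ⌉ - 1 : ℤ) : ℝ) < 0 := by
        push_cast
        exact mul_neg_of_neg_of_pos hα hgt
      push_cast at h0 this
      linarith
    have : ⌈γ⌉ ≤ 1 := by exact_mod_cast (by linarith : ((⌈γ⌉:ℝ)) ≤ 1)
    calc γ ≤ ⌈γ⌉ := Int.le_ceil γ
      _ ≤ 1 := by exact_mod_cast this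
  -- γ < 1 (if γ = 1 then α = β and the claim is immediate)
  have hγlt1 : γ < 1 := by
    rcases lt_or_eq_of_le hγle1 with h | h
    · exact h
    · exfalso
      have hβα : β = α := by
        field_simp [hγ] at h
        rw [hγ, div_eq_one_iff_eq hα0] at h; exact h
      have hNm : NN α β m₀ = m₀ := by
        simp only [NN, hβα]
        have h2 : α * ((m₀ : ℝ) + 1) / α = ((m₀ : ℝ) + 1) := by field_simp
        rw [h2, show ((m₀:ℝ)+1) = ((m₀+1 : ℤ):ℝ) by push_cast; ring, Int.ceil_intCast]
        omega
      rw [hNm] at hcon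
      have h3 : α * (m₀:ℝ) = (Z:ℝ) := by rw [← hβα]; exact hZ
      linarith
  set w : ℝ := γ * (m₀ : ℝ) with hw
  have hαw : α * w = (Z : ℝ) := by
    rw [hw, hγ]; field_simp; linarith [hZ]
  set N : ℤ := NN α β m₀ with hN
  have hNceil : N = ⌈w + γ⌉ - 1 := by
    rw [hN]
    simp only [NN]
    congr 1
    congr 1
    rw [hw, hγ]
    field_simp
  -- N > w from the contradiction hypothesis
  have hNgtw : w < (N : ℝ) := by
    have h1 : α * ((N : ℤ) : ℝ) < α * w := by rw [hαw]; exact hcon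
    exact (mul_lt_mul_left_of_neg hα).mp h1
  -- N < w + γ
  have hNlt : (N : ℝ) < w + γ := by
    rw [hNceil]
    push_cast
    linarith [Int.ceil_lt_add_one (w + γ)]
  -- δ := w + γ - ⌊w⌋ - 1 ∈ (0, γ)
  set δ : ℝ := w + γ - (⌊w⌋ : ℝ) - 1 with hδ
  have hfloorw : (⌊w⌋ : ℝ) + 1 ≤ (N : ℝ) := by
    have : ⌊w⌋ < N := Int.floor_lt.mpr hNgtw
    exact_mod_cast this
  have hδpos : 0 < δ := by rw [hδ]; linarith
  have hδltγ : δ < γ := by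
    rw [hδ]
    have := Int.lt_floor_add_one w
    linarith
  set η : ℝ := min δ (γ - δ) / 2 with hη
  have hηpos : 0 < η := by
    rw [hη]
    have : 0 < min δ (γ - δ) := lt_min hδpos (by linarith)
    linarith
  have hηδ : η ≤ δ / 2 := by
    rw [hη]; have := min_le_left δ (γ - δ); linarith
  have hηγδ : η ≤ (γ - δ) / 2 := by
    rw [hη]; have := min_le_right δ (γ - δ); linarith
  obtain ⟨l, hl, c, hc⟩ := dirichlet_approx (2 * (δ - γ)) hηpos
  set x : ℝ := (l : ℝ) * (2 * (δ - γ)) - (c : ℝ) with hx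
  have hxabs : |x| < η := hc
  have hxlt : x < η := lt_of_le_of_lt (le_abs_self x) hxabs
  have hxgt : -η < x := by
    have := neg_abs_le x
    linarith
  set μ : ℤ := m₀ * (2 * l - 1) with hμ
  have hμpos : 1 ≤ μ := by
    rw [hμ]
    have h1 : (1 : ℤ) ≤ 2 * l - 1 := by omega
    nlinarith
  -- the instance at m = -μ
  have hinst := hex (-μ) (by omega)
  set z' : ℝ := γ * ((μ : ℝ) - 1) with hz'
  -- compute the floor argument
  have harg : β * ((-μ : ℤ) : ℝ) = ((-(Z * (2 * l - 1)) : ℤ) : ℝ) := by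
    push_cast [hμ]
    rw [← hZ]
    ring
  have hfloor1 : ⌊β * ((-μ : ℤ) : ℝ)⌋ = -(Z * (2 * l - 1)) := by
    rw [harg, Int.floor_intCast]
  -- compute NN at -μ
  have hNNμ : NN α β (-μ) = -⌊z'⌋ - 1 := by
    simp only [NN]
    have harg2 : β * (((-μ : ℤ) : ℝ) + 1) / α = -z' := by
      rw [hz', hγ]
      push_cast
      field_simp
      ring
    rw [harg2, Int.ceil_neg]
  rw [hfloor1, hNNμ] at hinst
  -- from the instance: ⌊z'⌋ + 1 ≥ w * (2l - 1)
  have hkey : w * (2 * (l : ℝ) - 1) ≤ (⌊z'⌋ : ℝ) + 1 := by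
    have h1 : ((-(Z * (2 * l - 1)) : ℤ) : ℝ) = α * (-(w * (2 * (l:ℝ) - 1))) := by
      push_cast
      rw [← hαw]
      ring
    rw [h1] at hinst
    have h2 : ((( -⌊z'⌋ - 1 : ℤ)) : ℝ) = -((⌊z'⌋ : ℝ) + 1) := by push_cast; ring
    rw [h2] at hinst
    have h3 := (mul_le_mul_left_of_neg hα).mp hinst
    linarith
  -- algebraic identity: z' = K + x - δ
  set K : ℤ := (2 * l - 1) * (⌊w⌋ + 1) + c with hK
  have hweq : w = (⌊w⌋ : ℝ) + 1 - γ + δ := by rw [hδ]; ring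
  have hz'eq : z' = (K : ℝ) + x - δ := by
    have h1 : z' = w * (2 * (l:ℝ) - 1) - γ := by
      rw [hz', hw]; push_cast [hμ]; ring
    rw [h1, hweq, hK, hx]
    push_cast
    ring
  -- hence ⌊z'⌋ = K - 1
  have hfloorz' : ⌊z'⌋ = K - 1 := by
    rw [Int.floor_eq_iff]
    constructor
    · push_cast
      rw [hz'eq]
      have : -η > δ - 1 := by linarith
      linarith
    · push_cast
      rw [hz'eq]
      linarith
  -- final contradiction
  have hfinal : z' + γ = w * (2 * (l:ℝ) - 1) := by
    rw [hz']
    push_cast [hμ]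
    rw [hw]
    ring
  rw [hfloorz'] at hkey
  push_cast at hkey
  -- hkey : w * (2l - 1) ≤ K - 1 + 1 = K
  -- but w*(2l-1) = z' + γ = K + x - δ + γ, so x - δ + γ ≤ 0, contradiction
  have : (K : ℝ) + x - δ + γ ≤ (K : ℝ) := by
    rw [← hz'eq] at *
    linarith [hfinal, hkey]
  linarith
-- KEY LEMMA, negative defect version
lemma key_neg (α β : ℝ) (hα : α < 0) (hβ : β < 0)
    (hex : ∀ m : ℤ, 0 ≤ m → ((⌊β * (m : ℝ)⌋ : ℤ) : ℝ) ≤ α * ((NN α β m : ℤ) : ℝ))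
    (m₀ : ℤ) (hm₀ : m₀ ≤ -1) (Z : ℤ) (hZ : β * (m₀ : ℝ) = (Z : ℝ)) :
    ((Z : ℤ) : ℝ) ≤ α * ((NN α β m₀ : ℤ) : ℝ) := by
  by_contra hcon
  push_neg at hcon
  have hα0 : α ≠ 0 := ne_of_lt hα
  set γ : ℝ := β / α with hγ
  have hγpos : 0 < γ := by
    rw [hγ, ← neg_div_neg_eq]
    exact div_pos (by linarith) (by linarith)
  have hNN0 : NN α β 0 = ⌈γ⌉ - 1 := by
    simp only [NN, hγ]
    norm_num
  have hγle1 : γ ≤ 1 := by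
    have h0 := hex 0 le_rfl
    norm_num at h0
    rw [hNN0] at h0
    have hle : ((⌈γ⌉ : ℝ) - 1) ≤ 0 := by
      by_contra hgt
      push_neg at hgt
      have : α * ((⌈γ⌉ - 1 : ℤ) : ℝ) < 0 := by
        push_cast
        exact mul_neg_of_neg_of_pos hα hgt
      push_cast at h0 this
      linarith
    have : ⌈γ⌉ ≤ 1 := by exact_mod_cast (by linarith : ((⌈γ⌉:ℝ)) ≤ 1)
    calc γ ≤ ⌈γ⌉ := Int.le_ceil γ
      _ ≤ 1 := by exact_mod_cast this
  have hγlt1 : γ < 1 := by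
    rcases lt_or_eq_of_le hγle1 with h | h
    · exact h
    · exfalso
      have hβα : β = α := by
        field_simp [hγ] at h
        rw [hγ, div_eq_one_iff_eq hα0] at h; exact h
      have hNm : NN α β m₀ = m₀ := by
        simp only [NN, hβα]
        have h2 : α * ((m₀ : ℝ) + 1) / α = ((m₀ : ℝ) + 1) := by field_simp
        rw [h2, show ((m₀:ℝ)+1) = ((m₀+1 : ℤ):ℝ) by push_cast; ring, Int.ceil_intCast]
        omega
      rw [hNm] at hcon
      have h3 : α * (m₀:ℝ) = (Z:ℝ) := by rw [← hβα]; exact hZ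
      linarith
  set w : ℝ := γ * (m₀ : ℝ) with hw
  have hαw : α * w = (Z : ℝ) := by
    rw [hw, hγ]; field_simp; linarith [hZ]
  set N : ℤ := NN α β m₀ with hN
  have hNceil : N = ⌈w + γ⌉ - 1 := by
    rw [hN]
    simp only [NN]
    congr 1
    congr 1
    rw [hw, hγ]
    field_simp
  have hNgtw : w < (N : ℝ) := by
    have h1 : α * ((N : ℤ) : ℝ) < α * w := by rw [hαw]; exact hcon
    exact (mul_lt_mul_left_of_neg hα).mp h1
  have hNlt : (N : ℝ) < w + γ := by
    rw [hNceil]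
    push_cast
    linarith [Int.ceil_lt_add_one (w + γ)]
  set δ : ℝ := w + γ - (⌊w⌋ : ℝ) - 1 with hδ
  have hfloorw : (⌊w⌋ : ℝ) + 1 ≤ (N : ℝ) := by
    have : ⌊w⌋ < N := Int.floor_lt.mpr hNgtw
    exact_mod_cast this
  have hδpos : 0 < δ := by rw [hδ]; linarith
  have hδltγ : δ < γ := by
    rw [hδ]
    have := Int.lt_floor_add_one w
    linarith
  set η : ℝ := min δ (γ - δ) / 2 with hη
  have hηpos : 0 < η := by
    rw [hη]
    have : 0 < min δ (γ - δ) := lt_min hδpos (by linarith)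
    linarith
  have hηδ : η ≤ δ / 2 := by
    rw [hη]; have := min_le_left δ (γ - δ); linarith
  have hηγδ : η ≤ (γ - δ) / 2 := by
    rw [hη]; have := min_le_right δ (γ - δ); linarith
  obtain ⟨l, hl, c, hc⟩ := dirichlet_approx (2 * (γ - δ)) hηpos
  set x : ℝ := (l : ℝ) * (2 * (γ - δ)) - (c : ℝ) with hx
  have hxabs : |x| < η := hc
  have hxlt : x < η := lt_of_le_of_lt (le_abs_self x) hxabs
  have hxgt : -η < x := by
    have := neg_abs_le x
    linarith
  set μ : ℤ := (-m₀) * (2 * l - 1) with hμ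
  have hμpos : 1 ≤ μ := by
    rw [hμ]
    have h1 : (1 : ℤ) ≤ 2 * l - 1 := by omega
    nlinarith
  have hinst := hex μ (by omega)
  set z : ℝ := γ * ((μ : ℝ) + 1) with hz
  have harg : β * ((μ : ℤ) : ℝ) = ((-(Z * (2 * l - 1)) : ℤ) : ℝ) := by
    push_cast [hμ]
    rw [← hZ]
    ring
  have hfloor1 : ⌊β * ((μ : ℤ) : ℝ)⌋ = -(Z * (2 * l - 1)) := by
    rw [harg, Int.floor_intCast]
  have hNNμ : NN α β μ = ⌈z⌉ - 1 := by
    simp only [NN]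
    congr 1
    congr 1
    rw [hz, hγ]
    field_simp
  rw [hfloor1, hNNμ] at hinst
  -- from instance: ⌈z⌉ - 1 ≤ -w(2l-1)
  have hkey : ((⌈z⌉ : ℝ) - 1) ≤ -(w * (2 * (l : ℝ) - 1)) := by
    have h1 : ((-(Z * (2 * l - 1)) : ℤ) : ℝ) = α * (-(w * (2 * (l:ℝ) - 1))) := by
      push_cast
      rw [← hαw]
      ring
    rw [h1] at hinst
    have h2 : (((⌈z⌉ - 1 : ℤ)) : ℝ) = (⌈z⌉ : ℝ) - 1 := by push_cast; ring
    rw [h2] at hinst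
    exact (mul_le_mul_left_of_neg hα).mp hinst
  -- algebraic identity: z = K' + x + δ
  set K : ℤ := -((2 * l - 1) * (⌊w⌋ + 1)) + c with hK
  have hweq : w = (⌊w⌋ : ℝ) + 1 - γ + δ := by rw [hδ]; ring
  have hzeq : z = (K : ℝ) + x + δ := by
    have h1 : z = -(w * (2 * (l:ℝ) - 1)) + γ := by
      rw [hz, hw]; push_cast [hμ]; ring
    rw [h1, hweq, hK, hx]
    push_cast
    ring
  -- hence ⌈z⌉ = K + 1
  have hceilz : ⌈z⌉ = K + 1 := by
    rw [Int.ceil_eq_iff]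
    constructor
    · push_cast
      rw [hzeq]
      linarith
    · push_cast
      rw [hzeq]
      linarith
  -- final contradiction
  have hfinal : -(w * (2 * (l:ℝ) - 1)) = z - γ := by
    rw [hz]
    push_cast [hμ]
    rw [hw]
    ring
  rw [hceilz] at hkey
  rw [hfinal, hzeq] at hkey
  push_cast at hkey
  -- hkey : K + 1 - 1 ≤ K + x + δ - γ, so γ - δ ≤ x, contradiction with x < η ≤ (γ-δ)/2
  linarith
-- transfer of an achievable pair to nearby parameters
lemma transfer (α β : ℝ) (hα : α < 0) (hβ : β < 0) (u : ℕ → ℝ × ℝ)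
    (h1 : Filter.Tendsto (fun k => (u k).1) Filter.atTop (𝓝 α))
    (h2 : Filter.Tendsto (fun k => (u k).2) Filter.atTop (𝓝 β))
    (m n : ℤ) (x : ℝ) (hm : ⌊α * x⌋ = m) (hn : ⌊β * x⌋ = n) :
    ∀ᶠ k in Filter.atTop, ∃ y : ℝ, ⌊(u k).1 * y⌋ = m ∧ ⌊(u k).2 * y⌋ = n := by
  have hxm : (m : ℝ) ≤ α * x := by rw [← hm]; exact Int.floor_le _
  have hxm1 : α * x < (m : ℝ) + 1 := by rw [← hm]; push_cast; exact Int.lt_floor_add_one _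
  have hxn : (n : ℝ) ≤ β * x := by rw [← hn]; exact Int.floor_le _
  have hxn1 : β * x < (n : ℝ) + 1 := by rw [← hn]; push_cast; exact Int.lt_floor_add_one _
  -- x ≤ m/α, x ≤ n/β, x > (m+1)/α, x > (n+1)/β
  have hxa : x ≤ (m : ℝ) / α := by rw [le_div_iff_of_neg hα]; linarith [mul_comm α x]
  have hxb : x ≤ (n : ℝ) / β := by rw [le_div_iff_of_neg hβ]; linarith [mul_comm β x]
  have hxa1 : ((m : ℝ) + 1) / α < x := by rw [div_lt_iff_of_neg hα]; linarith [mul_comm α x]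
  have hxb1 : ((n : ℝ) + 1) / β < x := by rw [div_lt_iff_of_neg hβ]; linarith [mul_comm β x]
  have hα0 : α ≠ 0 := ne_of_lt hα
  have hβ0 : β ≠ 0 := ne_of_lt hβ
  -- limits of the four quotient sequences
  have t1 : Filter.Tendsto (fun k => (m : ℝ) / (u k).1) Filter.atTop (𝓝 ((m : ℝ) / α)) :=
    (tendsto_const_nhds.div h1 hα0)
  have t2 : Filter.Tendsto (fun k => (n : ℝ) / (u k).2) Filter.atTop (𝓝 ((n : ℝ) / β)) :=
    (tendsto_const_nhds.div h2 hβ0)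
  have t3 : Filter.Tendsto (fun k => ((m : ℝ) + 1) / (u k).1) Filter.atTop (𝓝 (((m : ℝ) + 1) / α)) :=
    (tendsto_const_nhds.div h1 hα0)
  have t4 : Filter.Tendsto (fun k => ((n : ℝ) + 1) / (u k).2) Filter.atTop (𝓝 (((n : ℝ) + 1) / β)) :=
    (tendsto_const_nhds.div h2 hβ0)
  -- eventual facts
  have e1 : ∀ᶠ k in Filter.atTop, (u k).1 < 0 := h1.eventually_lt_const hα
  have e2 : ∀ᶠ k in Filter.atTop, (u k).2 < 0 := h2.eventually_lt_const hβ
  -- m/αₖ > (n+1)/βₖ eventually (limits: m/α ≥ x > (n+1)/β)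
  have e3 : ∀ᶠ k in Filter.atTop, ((n : ℝ) + 1) / (u k).2 < (m : ℝ) / (u k).1 := by
    have hlt : ((n : ℝ) + 1) / β < (m : ℝ) / α := lt_of_lt_of_le hxb1 hxa
    exact t4.eventually_lt t1 hlt
  have e4 : ∀ᶠ k in Filter.atTop, ((m : ℝ) + 1) / (u k).1 < (n : ℝ) / (u k).2 := by
    have hlt : ((m : ℝ) + 1) / α < (n : ℝ) / β := lt_of_lt_of_le hxa1 hxb
    exact t3.eventually_lt t2 hlt
  filter_upwards [e1, e2, e3, e4] with k hk1 hk2 hk3 hk4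
  set A := (u k).1
  set B := (u k).2
  refine ⟨min ((m : ℝ) / A) ((n : ℝ) / B), ?_, ?_⟩
  · rw [Int.floor_eq_iff]
    constructor
    · have hy : min ((m : ℝ) / A) ((n : ℝ) / B) ≤ (m : ℝ) / A := min_le_left _ _
      have := mul_le_mul_of_nonpos_left hy (le_of_lt hk1)
      rw [mul_div_cancel₀ _ (ne_of_lt hk1)] at this
      linarith
    · -- A * y < m+1 ⟺ y > (m+1)/A
      have hy : ((m : ℝ) + 1) / A < min ((m : ℝ) / A) ((n : ℝ) / B) := by
        apply lt_min
        · have hr : ((m:ℝ)+1)/A = (m:ℝ)/A + 1/A := by ring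
          have : 1/A < 0 := one_div_neg.mpr hk1
          linarith
        · exact hk4
      have := mul_lt_mul_of_neg_left hy hk1
      rw [mul_div_cancel₀ _ (ne_of_lt hk1)] at this
      push_cast
      linarith
  · rw [Int.floor_eq_iff]
    constructor
    · have hy : min ((m : ℝ) / A) ((n : ℝ) / B) ≤ (n : ℝ) / B := min_le_right _ _
      have := mul_le_mul_of_nonpos_left hy (le_of_lt hk2)
      rw [mul_div_cancel₀ _ (ne_of_lt hk2)] at this
      linarith
    · have hy : ((n : ℝ) + 1) / B < min ((m : ℝ) / A) ((n : ℝ) / B) := by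
        apply lt_min
        · exact hk3
        · have hr : ((n:ℝ)+1)/B = (n:ℝ)/B + 1/B := by ring
          have : 1/B < 0 := one_div_neg.mpr hk2
          linarith
      have := mul_lt_mul_of_neg_left hy hk2
      rw [mul_div_cancel₀ _ (ne_of_lt hk2)] at this
      push_cast
      linarith
theorem closed_set_property_negative_dilations :
    IsClosed {p : ℝ × ℝ | p.1 ≤ 0 ∧ p.2 ≤ 0 ∧
      ∀ x : ℝ, ⌊p.1 * (⌊p.2 * x⌋ : ℝ)⌋ ≥ ⌊p.2 * (⌊p.1 * x⌋ : ℝ)⌋} := by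
  apply IsSeqClosed.isClosed
  intro u p hu hup
  have h1 : Filter.Tendsto (fun k => (u k).1) Filter.atTop (𝓝 p.1) :=
    (continuous_fst.tendsto p).comp hup
  have h2 : Filter.Tendsto (fun k => (u k).2) Filter.atTop (𝓝 p.2) :=
    (continuous_snd.tendsto p).comp hup
  have hp1 : p.1 ≤ 0 := le_of_tendsto h1 (Filter.Eventually.of_forall fun k => (hu k).1)
  have hp2 : p.2 ≤ 0 := le_of_tendsto h2 (Filter.Eventually.of_forall fun k => (hu k).2.1)
  refine ⟨hp1, hp2, ?_⟩
  rcases eq_or_lt_of_le hp1 with hα0 | hα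
  · intro x
    rw [hα0]
    simp
  rcases eq_or_lt_of_le hp2 with hβ0 | hβ
  · intro x
    rw [hβ0]
    simp
  set α : ℝ := p.1 with hαdef
  set β : ℝ := p.2 with hβdef
  -- member instances transferred
  have hmem : ∀ m : ℤ, ∀ᶠ k in Filter.atTop,
      ((⌊(u k).2 * (m : ℝ)⌋ : ℤ) : ℝ) ≤ (u k).1 * ((NN α β m : ℤ) : ℝ) := by
    intro m
    obtain ⟨x, hxm, hxn⟩ := exists_x_pair α β hα hβ m
    filter_upwards [transfer α β hα hβ u h1 h2 m (NN α β m) x hxm hxn] with k hk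
    obtain ⟨y, hy1, hy2⟩ := hk
    have hc := (hu k).2.2 y
    rw [hy1, hy2] at hc
    exact_mod_cast Int.le_floor.mp hc
  -- trichotomy per m
  have htri : ∀ m : ℤ, (((⌊β * (m : ℝ)⌋ : ℤ) : ℝ) ≤ α * ((NN α β m : ℤ) : ℝ)) ∨
      ((∃ Z : ℤ, β * (m : ℝ) = (Z : ℝ)) ∧
        ∀ᶠ k in Filter.atTop, (u k).2 * (m : ℝ) < β * (m : ℝ)) := by
    intro m
    by_cases hfr : ∃ᶠ k in Filter.atTop, β * (m : ℝ) ≤ (u k).2 * (m : ℝ)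
    · left
      by_contra hcon
      push_neg at hcon
      have hev : ∀ᶠ k in Filter.atTop,
          (u k).1 * ((NN α β m : ℤ) : ℝ) < ((⌊β * (m : ℝ)⌋ : ℤ) : ℝ) :=
        (h1.mul_const _).eventually_lt_const hcon
      obtain ⟨k, ⟨hk1, hk2⟩, hk3⟩ := ((hfr.and_eventually (hmem m)).and_eventually hev).exists
      have h4 : (⌊β * (m : ℝ)⌋ : ℤ) ≤ ⌊(u k).2 * (m : ℝ)⌋ := Int.floor_le_floor hk1
      have h5 : ((⌊β * (m : ℝ)⌋ : ℤ) : ℝ) ≤ ((⌊(u k).2 * (m : ℝ)⌋ : ℤ) : ℝ) := by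
        exact_mod_cast h4
      linarith
    · rw [Filter.not_frequently] at hfr
      simp only [not_le] at hfr
      by_cases hint : ∃ Z : ℤ, β * (m : ℝ) = (Z : ℝ)
      · right; exact ⟨hint, hfr⟩
      · left
        have hne : ((⌊β * (m : ℝ)⌋ : ℤ) : ℝ) ≠ β * (m : ℝ) := by
          intro h
          exact hint ⟨⌊β * (m : ℝ)⌋, h.symm⟩
        have hlt : ((⌊β * (m : ℝ)⌋ : ℤ) : ℝ) < β * (m : ℝ) :=
          lt_of_le_of_ne (Int.floor_le _) hne
        have hlt2 : β * (m : ℝ) < ((⌊β * (m : ℝ)⌋ : ℤ) : ℝ) + 1 := Int.lt_floor_add_one _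
        have hev1 : ∀ᶠ k in Filter.atTop, ((⌊β * (m : ℝ)⌋ : ℤ) : ℝ) < (u k).2 * (m : ℝ) :=
          (h2.mul_const _).eventually_const_lt hlt
        have hev2 : ∀ᶠ k in Filter.atTop, (u k).2 * (m : ℝ) < ((⌊β * (m : ℝ)⌋ : ℤ) : ℝ) + 1 :=
          (h2.mul_const _).eventually_lt_const hlt2
        have hev3 : ∀ᶠ k in Filter.atTop,
            ((⌊β * (m : ℝ)⌋ : ℤ) : ℝ) ≤ (u k).1 * ((NN α β m : ℤ) : ℝ) := by
          filter_upwards [hev1, hev2, hmem m] with k hk1 hk2 hk3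
          have hfk : ⌊(u k).2 * (m : ℝ)⌋ = ⌊β * (m : ℝ)⌋ := by
            rw [Int.floor_eq_iff]
            exact ⟨le_of_lt hk1, hk2⟩
          rw [hfk] at hk3
          exact hk3
        exact ge_of_tendsto (h1.mul_const _) hev3
  -- m = 0 is always good
  have hzero : ((⌊β * ((0 : ℤ) : ℝ)⌋ : ℤ) : ℝ) ≤ α * ((NN α β 0 : ℤ) : ℝ) := by
    rcases htri 0 with h | h
    · exact h
    · exfalso
      obtain ⟨k, hk⟩ := h.2.exists
      norm_num at hk
  -- sign conflict: there cannot be defects of both signs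
  by_cases hpos : ∀ m : ℤ, 0 < m → ((⌊β * (m : ℝ)⌋ : ℤ) : ℝ) ≤ α * ((NN α β m : ℤ) : ℝ)
  · -- all positive instances good; get nonneg family, then key_neg for negative defects
    have hex_nonneg : ∀ m : ℤ, 0 ≤ m →
        ((⌊β * (m : ℝ)⌋ : ℤ) : ℝ) ≤ α * ((NN α β m : ℤ) : ℝ) := by
      intro m hm
      rcases eq_or_lt_of_le hm with h0 | h0
      · rw [← h0]; exact_mod_cast hzero
      · exact hpos m h0
    have hmain : ∀ m : ℤ, ((⌊β * (m : ℝ)⌋ : ℤ) : ℝ) ≤ α * ((NN α β m : ℤ) : ℝ) := by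
      intro m
      rcases le_or_gt 0 m with hm | hm
      · exact hex_nonneg m hm
      · rcases htri m with h | h
        · exact h
        · obtain ⟨⟨Z, hZ⟩, _⟩ := h
          have := key_neg α β hα hβ hex_nonneg m (by omega) Z hZ
          rw [hZ, Int.floor_intCast]
          exact this
    intro x
    exact (cond_iff α β hα hβ).mpr hmain x
  · -- some positive defect exists; so all nonpositive instances are good; use key_pos
    push_neg at hpos
    obtain ⟨mP, hmPpos, hmPbad⟩ := hpos
    have hbadP : (∃ Z : ℤ, β * (mP : ℝ) = (Z : ℝ)) ∧
        ∀ᶠ k in Filter.atTop, (u k).2 * (mP : ℝ) < β * (mP : ℝ) := by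
      rcases htri mP with h | h
      · exact absurd h (not_le.mpr hmPbad)
      · exact h
    have hsideP : ∀ᶠ k in Filter.atTop, (u k).2 < β := by
      filter_upwards [hbadP.2] with k hk
      have hmpos : (0 : ℝ) < (mP : ℝ) := by exact_mod_cast hmPpos
      exact lt_of_mul_lt_mul_right hk hmpos.le
    have hex_nonpos : ∀ m : ℤ, m ≤ 0 →
        ((⌊β * (m : ℝ)⌋ : ℤ) : ℝ) ≤ α * ((NN α β m : ℤ) : ℝ) := by
      intro m hm
      rcases eq_or_lt_of_le hm with h0 | h0
      · rw [h0]; exact_mod_cast hzero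
      · rcases htri m with h | h
        · exact h
        · exfalso
          have hsideN : ∀ᶠ k in Filter.atTop, β < (u k).2 := by
            filter_upwards [h.2] with k hk
            have hmneg : (m : ℝ) < 0 := by exact_mod_cast h0
            nlinarith
          obtain ⟨k, hk1, hk2⟩ := (hsideP.and hsideN).exists
          linarith
    have hmain : ∀ m : ℤ, ((⌊β * (m : ℝ)⌋ : ℤ) : ℝ) ≤ α * ((NN α β m : ℤ) : ℝ) := by
      intro m
      rcases le_or_gt m 0 with hm | hm
      · exact hex_nonpos m hm
      · rcases htri m with h | h
        · exact h
        · obtain ⟨⟨Z, hZ⟩, _⟩ := h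
          have := key_pos α β hα hβ hex_nonpos m (by omega) Z hZ
          rw [hZ, Int.floor_intCast]
          exact this
    intro x
    exact (cond_iff α β hα hβ).mpr hmain x
end

section
/- Let α < 0 and β < 0 be real numbers and let m ≥ 1 be an integer. If ⌊α⌊βx⌋⌋ ≥ ⌊β⌊αx⌋⌋ holds for all real x, then ⌊(mα)⌊βx⌋⌋ ≥ ⌊β⌊(mα)x⌋⌋ holds for all real x. -/
/-!
Dilating `α` by `m` is the same as dilating the argument: `⌊(mα)x⌋ = ⌊α(mx)⌋`. The hypothesis at
`mx` then gives `⌊β⌊α(mx)⌋⌋ ≤ ⌊α⌊β(mx)⌋⌋`, and since `m⌊βx⌋ ≤ ⌊β(mx)⌋` and `α ≤ 0`, we have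
`α⌊β(mx)⌋ ≤ mα⌊βx⌋`, which bounds the right-hand side by `⌊(mα)⌊βx⌋⌋`.
-/

section FloorRing

variable {R : Type*} [Ring R] [LinearOrder R] [IsStrictOrderedRing R] [FloorRing R]

theorem Int.mul_floor_le_floor_mul {m : ℤ} (hm : 0 ≤ m) (y : R) : m * ⌊y⌋ ≤ ⌊(m : R) * y⌋ :=
  Int.le_floor.mpr <| by
    push_cast
    exact mul_le_mul_of_nonneg_left (Int.floor_le y) (by exact_mod_cast hm)

theorem mul_floor_mul_le_of_nonpos {a : R} (ha : a ≤ 0) {m : ℤ} (hm : 0 ≤ m) (y : R) :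
    a * ⌊(m : R) * y⌋ ≤ (m * a) * ⌊y⌋ := by
  have key : ((m * ⌊y⌋ : ℤ) : R) ≤ ⌊(m : R) * y⌋ :=
    Int.cast_le.mpr (Int.mul_floor_le_floor_mul hm y)
  calc a * ⌊(m : R) * y⌋ ≤ a * ((m * ⌊y⌋ : ℤ) : R) := mul_le_mul_of_nonpos_left key ha
    _ = (m * a) * ⌊y⌋ := by rw [Int.cast_mul, ← mul_assoc, Int.cast_comm]

end FloorRing

theorem symmetry_mul_first_general (α β : ℝ) (hα : α < 0) (m : ℤ) (hm : 1 ≤ m)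
    (h : ∀ x : ℝ, ⌊α * (⌊β * x⌋ : ℝ)⌋ ≥ ⌊β * (⌊α * x⌋ : ℝ)⌋) :
    ∀ x : ℝ, ⌊((m : ℝ) * α) * (⌊β * x⌋ : ℝ)⌋ ≥ ⌊β * (⌊((m : ℝ) * α) * x⌋ : ℝ)⌋ := by
  intro x
  calc ⌊β * (⌊((m : ℝ) * α) * x⌋ : ℝ)⌋
      = ⌊β * (⌊α * ((m : ℝ) * x)⌋ : ℝ)⌋ := by rw [mul_comm (m : ℝ) α, mul_assoc]
    _ ≤ ⌊α * (⌊β * ((m : ℝ) * x)⌋ : ℝ)⌋ := h _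
    _ = ⌊α * (⌊(m : ℝ) * (β * x)⌋ : ℝ)⌋ := by rw [mul_left_comm]
    _ ≤ ⌊((m : ℝ) * α) * (⌊β * x⌋ : ℝ)⌋ :=
      Int.floor_le_floor (mul_floor_mul_le_of_nonpos hα.le (by omega) _)

theorem symmetry_mul_first (α β : ℝ) (hα : α < 0) (hβ : β < 0) (m : ℤ) (hm : 1 ≤ m)
    (h : ∀ x : ℝ, ⌊α * (⌊β * x⌋ : ℝ)⌋ ≥ ⌊β * (⌊α * x⌋ : ℝ)⌋) :
    ∀ x : ℝ, ⌊((m : ℝ) * α) * (⌊β * x⌋ : ℝ)⌋ ≥ ⌊β * (⌊((m : ℝ) * α) * x⌋ : ℝ)⌋ :=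
  symmetry_mul_first_general α β hα m hm h
end

section
/- Let α < 0 and β < 0 be real numbers and let m ≥ 1 be an integer. If ⌊α⌊βx⌋⌋ ≥ ⌊β⌊αx⌋⌋ holds for all real x, then ⌊(α/m)⌊(β/m)x⌋⌋ ≥ ⌊(β/m)⌊(α/m)x⌋⌋ holds for all real x. -/
theorem Int.floor_div_mul_floor_div_cast {k : Type*} [Field k] [LinearOrder k] [IsOrderedRing k]
    [FloorRing k] (a b x : k) {m : ℤ} (hm : 0 ≤ m) :
    ⌊a / m * ⌊b / m * x⌋⌋ = ⌊a * ⌊b * (x / m)⌋⌋ / m := by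
  rw [div_mul_eq_mul_div a, div_mul_eq_mul_div b, ← mul_div_assoc,
    Int.floor_div_cast_of_nonneg hm]

theorem symmetry_div_both_general (α β : ℝ) (m : ℤ) (hm : 1 ≤ m)
    (h : ∀ x : ℝ, ⌊α * (⌊β * x⌋ : ℝ)⌋ ≥ ⌊β * (⌊α * x⌋ : ℝ)⌋) :
    ∀ x : ℝ, ⌊(α / (m : ℝ)) * (⌊(β / (m : ℝ)) * x⌋ : ℝ)⌋ ≥
      ⌊(β / (m : ℝ)) * (⌊(α / (m : ℝ)) * x⌋ : ℝ)⌋ := by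
  intro x
  have hm_pos : 0 < m := hm
  rw [Int.floor_div_mul_floor_div_cast _ _ _ hm_pos.le,
    Int.floor_div_mul_floor_div_cast _ _ _ hm_pos.le]
  exact Int.ediv_le_ediv hm_pos (h (x / m))

theorem symmetry_div_both (α β : ℝ) (hα : α < 0) (hβ : β < 0) (m : ℤ) (hm : 1 ≤ m)
    (h : ∀ x : ℝ, ⌊α * (⌊β * x⌋ : ℝ)⌋ ≥ ⌊β * (⌊α * x⌋ : ℝ)⌋) :
    ∀ x : ℝ, ⌊(α / (m : ℝ)) * (⌊(β / (m : ℝ)) * x⌋ : ℝ)⌋ ≥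
      ⌊(β / (m : ℝ)) * (⌊(α / (m : ℝ)) * x⌋ : ℝ)⌋ :=
  symmetry_div_both_general α β m hm h
end

section
/- Let p, q ≥ 1 be coprime integers, let r ≥ 1 be an integer, and let β < 0 be real. Set α = −q/p and β′ = rβ/((1−r)pβ + 1) (note that (1−r)pβ + 1 > 0 since β < 0 and r ≥ 1). If ⌊α⌊βx⌋⌋ ≥ ⌊β⌊αx⌋⌋ holds for all real x, then ⌊α⌊β′x⌋⌋ ≥ ⌊β′⌊αx⌋⌋ holds for all real x. -/
/-!
For `α, β < 0` the relation `⌊α⌊βx⌋⌋ ≥ ⌊β⌊αx⌋⌋` fails somewhere iff there are integers `m, n, c`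
with `β(m + 1) < αn < c ≤ βm`: take `m = ⌊αx⌋`, `n = ⌊βx⌋`, `c = ⌊βm⌋` at a failing `x`, and
conversely any `x` with `⌊αx⌋ = m` and `⌊βx⌋ = n` fails. For `α = -q/p` we have `αn = K/p` with
`K ∈ ℤ`. Clearing the positive denominator of `β' = Φ_p^r(β)` turns a witness `(m, n, c)` for `β'`
into the conditions `β(r(m + 1) + (r - 1)K) < K/p` and `c ≤ β(rm + (r - 1)pc)`; since `K < pc`
are integers, `m' = rm + r - 1 + (r - 1)K ≤ rm + (r - 1)pc`, so `(m', n, c)` is a witness for `β`.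
-/

/-- The linear fractional transformation `Φ_p^r`. -/
noncomputable def linFrac (p r : ℤ) (β : ℝ) : ℝ :=
  r * β / ((1 - r) * p * β + 1)

section FloorCommutator

variable {α β : ℝ}

theorem exists_floor_triple_of_floor_comm_lt (hα : α ≤ 0) (hβ : β < 0) {x : ℝ}
    (hx : ⌊α * ⌊β * x⌋⌋ < ⌊β * ⌊α * x⌋⌋) :
    ∃ m n c : ℤ, β * (m + 1) < α * n ∧ α * n < c ∧ (c : ℝ) ≤ β * m := by
  refine ⟨⌊α * x⌋, ⌊β * x⌋, ⌊β * ⌊α * x⌋⌋, ?_, Int.floor_lt.1 hx, Int.floor_le _⟩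
  have hm := mul_lt_mul_of_neg_left (Int.lt_floor_add_one (α * x)) hβ
  have hn := mul_le_mul_of_nonpos_left (Int.floor_le (β * x)) hα
  linarith

theorem floor_mul_eq_of_neg (hα : α < 0) {m : ℤ} {x : ℝ} (hlt : (m + 1) / α < x)
    (hle : x ≤ m / α) : ⌊α * x⌋ = m := by
  rw [Int.floor_eq_iff]
  constructor
  · rwa [le_div_iff_of_neg hα, mul_comm] at hle
  · rwa [div_lt_iff_of_neg hα, mul_comm] at hlt

theorem div_lt_div_of_mul_lt_of_neg (hα : α < 0) (hβ : β < 0) {a b : ℝ} (h : β * a < α * b) :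
    a / α < b / β := by
  have hαβ : 0 < α * β := mul_pos_of_neg_of_neg hα hβ
  calc a / α = β * a / (α * β) := by rw [mul_comm β a, mul_div_mul_right a α hβ.ne]
    _ < α * b / (α * β) := div_lt_div_of_pos_right h hαβ
    _ = b / β := mul_div_mul_left b β hα.ne

theorem exists_floor_comm_lt_of_triple (hα : α < 0) (hβ : β < 0) {m n c : ℤ}
    (h₁ : β * (m + 1) < α * n) (h₂ : α * n < c) (h₃ : (c : ℝ) ≤ β * m) :
    ∃ x : ℝ, ⌊α * ⌊β * x⌋⌋ < ⌊β * ⌊α * x⌋⌋ := by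
  -- `⌊α * x⌋ = m` on `Ioc ((m + 1) / α) (m / α)`; `h₁`, `h₂`, `h₃` make it meet the interval for `β, n`.
  set x := min ((m : ℝ) / α) (n / β)
  have hαx : ⌊α * x⌋ = m := floor_mul_eq_of_neg hα
    (lt_min ((div_lt_div_right_of_neg hα).2 (lt_add_one _)) (div_lt_div_of_mul_lt_of_neg hα hβ h₁))
    (min_le_left ..)
  have hβx : ⌊β * x⌋ = n := floor_mul_eq_of_neg hβ
    (lt_min (div_lt_div_of_mul_lt_of_neg hβ hα (by linarith))
      ((div_lt_div_right_of_neg hβ).2 (lt_add_one _))) (min_le_right ..)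
  refine ⟨x, ?_⟩
  rw [hαx, hβx]
  exact (Int.floor_lt.2 h₂).trans_le (Int.le_floor.2 h₃)

end FloorCommutator

section LinFrac

variable {p r : ℤ} {β : ℝ}

theorem linFrac_denom_pos (hp : 0 ≤ p) (hr : 1 ≤ r) (hβ : β ≤ 0) :
    0 < (1 - r) * p * β + 1 := by
  have hrp : (1 - r : ℝ) * p ≤ 0 :=
    mul_nonpos_of_nonpos_of_nonneg (by rw [sub_nonpos]; exact_mod_cast hr) (by exact_mod_cast hp)
  linarith [mul_nonneg_of_nonpos_of_nonpos hrp hβ]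

theorem le_linFrac_mul_iff (hD : 0 < (1 - r) * p * β + 1) {a y : ℝ} :
    a ≤ linFrac p r β * y ↔ a ≤ β * (r * y + (r - 1) * p * a) := by
  have key : r * β * y - a * ((1 - r) * p * β + 1) = β * (r * y + (r - 1) * p * a) - a := by ring
  rw [linFrac, div_mul_eq_mul_div, le_div_iff₀ hD, ← sub_nonneg, key, sub_nonneg]

theorem linFrac_mul_lt_div_iff (hp : (0 : ℝ) < p) (hD : 0 < (1 - r) * p * β + 1) {a y : ℝ} :
    linFrac p r β * y < a / p ↔ β * (r * y + (r - 1) * a) < a / p := by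
  have key : a * ((1 - r) * p * β + 1) - r * β * y * p = a - β * (r * y + (r - 1) * a) * p := by
    ring
  rw [linFrac, div_mul_eq_mul_div, div_lt_div_iff₀ hD hp, lt_div_iff₀ hp, ← sub_pos, key, sub_pos]

theorem exists_triple_of_linFrac (hp : 0 < p) (hr : 1 ≤ r) (hβ : β < 0) {K m c : ℤ}
    (h₁ : linFrac p r β * (m + 1) < K / p) (h₂ : (K : ℝ) / p < c)
    (h₃ : (c : ℝ) ≤ linFrac p r β * m) :
    ∃ m' : ℤ, β * (m' + 1) < K / p ∧ (c : ℝ) ≤ β * m' := by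
  have hp' : (0 : ℝ) < p := by exact_mod_cast hp
  have hD := linFrac_denom_pos hp.le hr hβ.le
  have hK : K < p * c := by exact_mod_cast (div_lt_iff₀' hp').1 h₂
  refine ⟨r * m + r - 1 + (r - 1) * K, ?_, ?_⟩
  · rw [linFrac_mul_lt_div_iff hp' hD] at h₁
    push_cast
    linarith
  · rw [le_linFrac_mul_iff hD] at h₃
    have hm' : r * m + r - 1 + (r - 1) * K ≤ r * m + (r - 1) * p * c := by
      nlinarith [mul_nonneg (sub_nonneg.2 hr) (by omega : 0 ≤ p * c - 1 - K)]
    calc (c : ℝ) ≤ β * (r * m + (r - 1) * p * c) := h₃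
      _ ≤ β * ((r * m + r - 1 + (r - 1) * K : ℤ) : ℝ) :=
        mul_le_mul_of_nonpos_left (by exact_mod_cast hm') hβ.le

end LinFrac

theorem linear_fractional_symmetry_general (p q r : ℤ) (hp : 1 ≤ p) (hq : 1 ≤ q)
    (hr : 1 ≤ r) (β : ℝ) (hβ : β < 0)
    (h : ∀ x : ℝ, ⌊(-(q : ℝ) / (p : ℝ)) * (⌊β * x⌋ : ℝ)⌋ ≥
          ⌊β * (⌊(-(q : ℝ) / (p : ℝ)) * x⌋ : ℝ)⌋) :
    ∀ x : ℝ,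
      ⌊(-(q : ℝ) / (p : ℝ)) *
          (⌊((r : ℝ) * β / ((1 - (r : ℝ)) * (p : ℝ) * β + 1)) * x⌋ : ℝ)⌋ ≥
      ⌊((r : ℝ) * β / ((1 - (r : ℝ)) * (p : ℝ) * β + 1)) *
          (⌊(-(q : ℝ) / (p : ℝ)) * x⌋ : ℝ)⌋ := by
  intro x
  have hp' : (0 : ℝ) < p := by exact_mod_cast hp
  have hα : -(q : ℝ) / p < 0 :=
    div_neg_of_neg_of_pos (neg_neg_of_pos (by exact_mod_cast hq)) hp'
  have hβ' : linFrac p r β < 0 := div_neg_of_neg_of_pos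
    (mul_neg_of_pos_of_neg (by exact_mod_cast hr) hβ) (linFrac_denom_pos (by omega) hr hβ.le)
  by_contra! hcon
  obtain ⟨m, n, c, h₁, h₂, h₃⟩ := exists_floor_triple_of_floor_comm_lt hα.le hβ' hcon
  have hK : -(q : ℝ) / p * n = ((-(n * q) : ℤ) : ℝ) / p := by push_cast; ring
  rw [hK] at h₁ h₂
  obtain ⟨m', h₁', h₃'⟩ := exists_triple_of_linFrac (by omega) hr hβ h₁ h₂ h₃
  obtain ⟨y, hy⟩ := exists_floor_comm_lt_of_triple hα hβ (hK ▸ h₁') (hK ▸ h₂) h₃'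
  exact (h y).not_gt hy

theorem linear_fractional_symmetry (p q r : ℤ) (hp : 1 ≤ p) (hq : 1 ≤ q)
    (hpq : IsCoprime p q) (hr : 1 ≤ r) (β : ℝ) (hβ : β < 0)
    (h : ∀ x : ℝ, ⌊(-(q : ℝ) / (p : ℝ)) * (⌊β * x⌋ : ℝ)⌋ ≥
          ⌊β * (⌊(-(q : ℝ) / (p : ℝ)) * x⌋ : ℝ)⌋) :
    ∀ x : ℝ,
      ⌊(-(q : ℝ) / (p : ℝ)) *
          (⌊((r : ℝ) * β / ((1 - (r : ℝ)) * (p : ℝ) * β + 1)) * x⌋ : ℝ)⌋ ≥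
      ⌊((r : ℝ) * β / ((1 - (r : ℝ)) * (p : ℝ) * β + 1)) *
          (⌊(-(q : ℝ) / (p : ℝ)) * x⌋ : ℝ)⌋ :=
  linear_fractional_symmetry_general p q r hp hq hr β hβ h
end

section
/- Let α, β > 0 be real numbers. Then α·(⌈x/α⌉ − 1) ≤ β·(⌈x/β⌉ − 1) holds for all real x if and only if there exists an integer m ≥ 1 such that α = mβ. -/
theorem strict_lower_rounding_ordering (α β : ℝ) (hα : 0 < α) (hβ : 0 < β) :
    (∀ x : ℝ, α * ((⌈x / α⌉ : ℝ) - 1) ≤ β * ((⌈x / β⌉ : ℝ) - 1)) ↔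
    ∃ m : ℤ, 1 ≤ m ∧ α = (m : ℝ) * β := by
  constructor
  · intro h
    set m : ℤ := ⌊α / β⌋ with hm
    set x : ℝ := β * ((m : ℝ) + 1) with hx
    have h1 : x / β = (m : ℝ) + 1 := by field_simp [hx]; exact hx
    have h2 : ⌈x / β⌉ = m + 1 := by
      rw [h1]
      rw [show ((m : ℝ) + 1) = ((m + 1 : ℤ) : ℝ) by push_cast; ring]
      exact Int.ceil_intCast _
    have hfl : (m : ℝ) ≤ α / β := Int.floor_le _
    have hfu : α / β < (m : ℝ) + 1 := Int.lt_floor_add_one _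
    have h3 : α < x := by
      have : α = β * (α / β) := by field_simp
      rw [this, hx]
      exact (mul_lt_mul_iff_right₀ hβ).mpr hfu
    have h4 : (1 : ℝ) < x / α := (one_lt_div hα).mpr h3
    have h5 : (1 : ℤ) < ⌈x / α⌉ := Int.lt_ceil.mpr (by exact_mod_cast h4)
    have h5' : (2 : ℝ) ≤ (⌈x / α⌉ : ℝ) := by exact_mod_cast h5
    have h7 := h x
    rw [h2] at h7
    push_cast at h7
    have h8' : (m : ℝ) * β ≤ α := by
      have := mul_le_mul_of_nonneg_left hfl hβ.le
      rw [mul_div_cancel₀ _ hβ.ne'] at this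
      linarith
    have heq : α = (m : ℝ) * β := by nlinarith
    have hm1 : 1 ≤ m := by
      have h0 : (0 : ℝ) < (m : ℝ) := by nlinarith
      have h0' : (0 : ℤ) < m := by exact_mod_cast h0
      omega
    exact ⟨m, hm1, heq⟩
  · rintro ⟨m, hm1, rfl⟩ x
    set k : ℤ := m * (⌈x / ((m : ℝ) * β)⌉ - 1) with hk
    have hmpos : (0 : ℝ) < (m : ℝ) := by exact_mod_cast hm1.trans_lt' zero_lt_one
    have hαpos : (0 : ℝ) < (m : ℝ) * β := by positivity
    have hceil : (⌈x / ((m : ℝ) * β)⌉ : ℝ) < x / ((m : ℝ) * β) + 1 :=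
      Int.ceil_lt_add_one _
    have hlt : (m : ℝ) * β * ((⌈x / ((m : ℝ) * β)⌉ : ℝ) - 1) < x := by
      have hxx : (m : ℝ) * β * (x / ((m : ℝ) * β)) = x := by field_simp
      nlinarith
    have hkr : (k : ℝ) = (m : ℝ) * ((⌈x / ((m : ℝ) * β)⌉ : ℝ) - 1) := by
      push_cast [hk]; ring
    have hklt : (k : ℝ) < x / β := by
      rw [lt_div_iff₀ hβ, hkr]
      nlinarith
    have hkc : k < ⌈x / β⌉ := Int.lt_ceil.mpr hklt
    have hkc' : (k : ℝ) ≤ (⌈x / β⌉ : ℝ) - 1 := by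
      have : (k : ℝ) + 1 ≤ (⌈x / β⌉ : ℝ) := by exact_mod_cast hkc
      linarith
    calc (m : ℝ) * β * ((⌈x / ((m : ℝ) * β)⌉ : ℝ) - 1) = β * (k : ℝ) := by
          rw [hkr]; ring
      _ ≤ β * ((⌈x / β⌉ : ℝ) - 1) := by
          exact mul_le_mul_of_nonneg_left hkc' hβ.le
end

section
/- Let α, β > 0 be real numbers. Then α·(⌊x/α⌋ + 1) ≤ β·(⌊x/β⌋ + 1) holds for all real x if and only if there exists an integer m ≥ 1 such that β = mα. -/
theorem strict_upper_rounding_ordering (α β : ℝ) (hα : 0 < α) (hβ : 0 < β) :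
    (∀ x : ℝ, α * ((⌊x / α⌋ : ℝ) + 1) ≤ β * ((⌊x / β⌋ : ℝ) + 1)) ↔
    ∃ m : ℤ, 1 ≤ m ∧ β = (m : ℝ) * α := by
  constructor
  · intro h
    set m0 : ℤ := ⌊β / α⌋ with hm0
    have hm0pos : 0 ≤ m0 := Int.floor_nonneg.mpr (le_of_lt (div_pos hβ hα))
    have hle : α * (m0 : ℝ) ≤ β := by
      have := Int.floor_le (β / α)
      calc α * (m0 : ℝ) = (m0 : ℝ) * α := mul_comm _ _
        _ ≤ (β / α) * α := by nlinarith
        _ = β := div_mul_cancel₀ β hα.ne'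
    rcases lt_or_eq_of_le hle with hlt | heq
    · exfalso
      have hx := h (α * (m0 : ℝ))
      have h1 : ⌊α * (m0 : ℝ) / α⌋ = m0 := by
        rw [mul_comm, mul_div_assoc, div_self hα.ne', mul_one, Int.floor_intCast]
      have h2 : ⌊α * (m0 : ℝ) / β⌋ = 0 := by
        apply Int.floor_eq_zero_iff.mpr
        constructor
        · positivity
        · rw [div_lt_one hβ]; exact hlt
      rw [h1, h2] at hx
      push_cast at hx
      -- hx : α * (m0 + 1) ≤ β * (0 + 1) = β
      have hfl : β / α < (m0 : ℝ) + 1 := Int.lt_floor_add_one _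
      rw [div_lt_iff₀ hα] at hfl
      nlinarith
    · exact ⟨m0, by
        constructor
        · by_contra hc
          push_neg at hc
          interval_cases m0
          simp at heq
          linarith
        · rw [← heq]; ring⟩
  · rintro ⟨m, hm1, rfl⟩ x
    have hmpos : (0 : ℝ) < (m : ℝ) := by exact_mod_cast lt_of_lt_of_le zero_lt_one hm1
    set k : ℤ := ⌊x / ((m : ℝ) * α)⌋ with hk
    have hgt : x / α < ((m * k + m : ℤ) : ℝ) := by
      have h1 : x / ((m : ℝ) * α) < (k : ℝ) + 1 := Int.lt_floor_add_one _
      have h2 : x / α = (m : ℝ) * (x / ((m : ℝ) * α)) := by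
        field_simp
      push_cast
      rw [h2]
      nlinarith
    have hfl : ⌊x / α⌋ < m * k + m := Int.floor_lt.mpr hgt
    have hfl' : (⌊x / α⌋ : ℝ) + 1 ≤ ((m * k + m : ℤ) : ℝ) := by
      exact_mod_cast Int.add_one_le_iff.mpr hfl
    calc α * ((⌊x / α⌋ : ℝ) + 1) ≤ α * ((m * k + m : ℤ) : ℝ) := by nlinarith
      _ = (m : ℝ) * α * ((k : ℝ) + 1) := by push_cast; ring
end

section
/- Let α′, β′ > 0 be real numbers. Then ⌊(−α′)⌊(−β′)x⌋⌋ ≥ ⌊(−β′)⌊(−α′)x⌋⌋ holds for all real x if and only if for every integer n one has α′·(⌈n/α′⌉ − 1) ≤ β′·(⌈n/β′⌉ − 1). -/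
lemma key_strict_rounding (a b : ℝ) (ha : 0 < a) (hb : 0 < b) (m : ℤ) (x : ℝ) :
    m ≤ ⌊(-b) * ((⌊(-a) * x⌋ : ℤ) : ℝ)⌋ ↔ ((⌈(m : ℝ) / b⌉ : ℝ) - 1) / a < x := by
  rw [Int.le_floor]
  have h1 : (m : ℝ) ≤ -b * ((⌊(-a) * x⌋ : ℤ) : ℝ) ↔
      ((⌊(-a) * x⌋ : ℤ) : ℝ) ≤ -(m : ℝ) / b := by
    rw [le_div_iff₀ hb]
    constructor <;> intro h <;> nlinarith
  rw [h1, ← Int.le_floor]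
  have h2 : ⌊-(m : ℝ) / b⌋ = -⌈(m : ℝ) / b⌉ := by
    rw [neg_div, Int.floor_neg]
  rw [h2]
  have h3 : ⌊(-a) * x⌋ ≤ -⌈(m : ℝ) / b⌉ ↔ ⌊(-a) * x⌋ < -⌈(m : ℝ) / b⌉ + 1 := by omega
  rw [h3, Int.floor_lt]
  push_cast
  rw [div_lt_iff₀ ha]
  constructor <;> intro h <;> nlinarith

theorem strict_rounding_criterion (α' β' : ℝ) (hα : 0 < α') (hβ : 0 < β') :
    (∀ x : ℝ, ⌊(-α') * (⌊(-β') * x⌋ : ℝ)⌋ ≥ ⌊(-β') * (⌊(-α') * x⌋ : ℝ)⌋) ↔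
    ∀ n : ℤ, α' * ((⌈(n : ℝ) / α'⌉ : ℝ) - 1) ≤ β' * ((⌈(n : ℝ) / β'⌉ : ℝ) - 1) := by
  constructor
  · intro h n
    by_contra hc
    push_neg at hc
    -- A(n) < B(n)
    set x : ℝ := ((⌈(n : ℝ) / α'⌉ : ℝ) - 1) / β' with hx
    have hA : ((⌈(n : ℝ) / β'⌉ : ℝ) - 1) / α' < x := by
      rw [hx, div_lt_div_iff₀ hα hβ]
      nlinarith
    have hG : n ≤ ⌊(-β') * ((⌊(-α') * x⌋ : ℤ) : ℝ)⌋ :=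
      (key_strict_rounding α' β' hα hβ n x).mpr hA
    have hF : n ≤ ⌊(-α') * ((⌊(-β') * x⌋ : ℤ) : ℝ)⌋ := le_trans hG (h x)
    have := (key_strict_rounding β' α' hβ hα n x).mp hF
    rw [hx] at this
    exact lt_irrefl _ this
  · intro h x
    set m : ℤ := ⌊(-β') * ((⌊(-α') * x⌋ : ℤ) : ℝ)⌋ with hm
    have hA : ((⌈(m : ℝ) / β'⌉ : ℝ) - 1) / α' < x :=
      (key_strict_rounding α' β' hα hβ m x).mp (le_refl m)
    have hBA : ((⌈(m : ℝ) / α'⌉ : ℝ) - 1) / β' ≤ ((⌈(m : ℝ) / β'⌉ : ℝ) - 1) / α' := by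
      rw [div_le_div_iff₀ hβ hα]
      nlinarith [h m]
    exact (key_strict_rounding β' α' hβ hα m x).mpr (lt_of_le_of_lt hBA hA)
end

section
/- Let α′, β′ > 0 be real numbers and let n be an integer. Then {x ∈ ℝ : ⌊(−α′)·⌊(−β′)x⌋⌋ ≥ n} = {x ∈ ℝ : x > (⌈n/α′⌉ − 1)/β′}. -/
section FloorScaling

variable {K : Type*} [Field K] [LinearOrder K] [IsStrictOrderedRing K] [FloorRing K]

theorem Int.le_floor_neg_mul_intCast_iff {a : K} (ha : 0 < a) (n m : ℤ) :
    n ≤ ⌊-a * m⌋ ↔ m ≤ -⌈(n : K) / a⌉ := by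
  have hscale : (n : K) ≤ -a * m ↔ (m : K) ≤ -((n : K) / a) := by
    rw [le_neg, div_le_iff₀ ha]
    constructor <;> intro h <;> linarith
  rw [Int.le_floor, hscale, ← Int.floor_neg, Int.le_floor]

theorem Int.floor_neg_mul_le_neg_iff {b : K} (hb : 0 < b) (c : ℤ) (x : K) :
    ⌊-b * x⌋ ≤ -c ↔ ((c : K) - 1) / b < x := by
  rw [← Int.lt_add_one_iff, Int.floor_lt, div_lt_iff₀ hb]
  push_cast
  constructor <;> intro h <;> linarith

end FloorScaling

theorem level_set_identity (α' β' : ℝ) (hα : 0 < α') (hβ : 0 < β') (n : ℤ) :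
    {x : ℝ | ⌊(-α') * (⌊(-β') * x⌋ : ℝ)⌋ ≥ n} =
    {x : ℝ | x > ((⌈(n : ℝ) / α'⌉ : ℝ) - 1) / β'} := by
  ext x
  exact (Int.le_floor_neg_mul_intCast_iff hα n _).trans (Int.floor_neg_mul_le_neg_iff hβ _ x)
end

section
/- Let μ, ν > 0 be real numbers. Then ⌊(−ν/μ)⌊(−1/μ)x⌋⌋ ≥ ⌊(−1/μ)⌊(−ν/μ)x⌋⌋ holds for all real x if and only if the lattice Λ_{μ,ν} = {(mμ, nν) : m, n ∈ ℤ} is disjoint from the punctured enlarged diagonal set D′ = ⋃_{n∈ℤ} {(x,y) ∈ ℝ² : n ≤ x ≤ n+1, n < y < n+1, and x ≠ y}. -/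
/-- The punctured enlarged diagonal set `D′`. -/
def Dprime : Set (ℝ × ℝ) :=
  ⋃ n : ℤ, {p : ℝ × ℝ | (n : ℝ) ≤ p.1 ∧ p.1 ≤ (n : ℝ) + 1 ∧
    (n : ℝ) < p.2 ∧ p.2 < (n : ℝ) + 1 ∧ p.1 ≠ p.2}

/-- The rectangular lattice `Λ_{μ,ν}`. -/
def RectLat (μ ν : ℝ) : Set (ℝ × ℝ) :=
  {p : ℝ × ℝ | ∃ m n : ℤ, p = ((m : ℝ) * μ, (n : ℝ) * ν)}

lemma viol (μ ν : ℝ) (hμ : 0 < μ) (N K M : ℤ)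
    (h1 : (K : ℝ) - 1 < ν * N) (h2 : (ν : ℝ) * N < K)
    (h3 : (ν : ℝ) * N < M * μ) (h4 : (M : ℝ) * μ ≤ K) :
    ¬ (⌊(-ν / μ) * (⌊(-1 / μ) * (μ * N)⌋ : ℝ)⌋ ≥
       ⌊(-1 / μ) * (⌊(-ν / μ) * (μ * N)⌋ : ℝ)⌋) := by
  have hμ' : μ ≠ 0 := ne_of_gt hμ
  have e1 : (-1 / μ) * (μ * (N : ℝ)) = ((-N : ℤ) : ℝ) := by
    push_cast; field_simp
  have e2 : (-ν / μ) * (μ * (N : ℝ)) = -(ν * N) := by field_simp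
  have f1 : ⌊(-1 / μ) * (μ * (N : ℝ))⌋ = -N := by rw [e1, Int.floor_intCast]
  have f2 : ⌊(-ν / μ) * (μ * (N : ℝ))⌋ = -K := by
    rw [e2, Int.floor_eq_iff]
    constructor
    · push_cast; linarith
    · push_cast; linarith
  rw [f1, f2]
  push_neg
  have g1 : ⌊(-ν / μ) * ((-N : ℤ) : ℝ)⌋ < M := by
    rw [Int.floor_lt]
    rw [div_mul_eq_mul_div, div_lt_iff₀ hμ]
    push_cast
    nlinarith
  have g2 : M ≤ ⌊(-1 / μ) * ((-K : ℤ) : ℝ)⌋ := by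
    rw [Int.le_floor]
    rw [div_mul_eq_mul_div, le_div_iff₀ hμ]
    push_cast
    nlinarith
  omega

theorem lattice_disjointness_criterion (μ ν : ℝ) (hμ : 0 < μ) (hν : 0 < ν) :
    (∀ x : ℝ, ⌊(-ν / μ) * (⌊(-1 / μ) * x⌋ : ℝ)⌋ ≥ ⌊(-1 / μ) * (⌊(-ν / μ) * x⌋ : ℝ)⌋) ↔
    Disjoint (RectLat μ ν) Dprime := by
  constructor
  · intro hL
    rw [Set.disjoint_left]
    rintro ⟨x, y⟩ ⟨m, n, hp⟩ hD
    simp only [Dprime, Set.mem_iUnion, Set.mem_setOf_eq] at hD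
    obtain ⟨k, hk1, hk2, hk3, hk4, hk5⟩ := hD
    injection hp with hx hy
    rw [hx] at hk1 hk2 hk5
    rw [hy] at hk3 hk4 hk5
    rcases lt_or_gt_of_ne hk5 with hlt | hgt
    · -- m*μ < n*ν : use N = -n, K = -k, M = -m
      refine viol μ ν hμ (-n) (-k) (-m) ?_ ?_ ?_ ?_ (hL (μ * ((-n : ℤ) : ℝ)))
      · push_cast; linarith
      · push_cast; nlinarith
      · push_cast; nlinarith
      · push_cast; linarith
    · -- m*μ > n*ν : use N = n, K = k+1, M = m
      refine viol μ ν hμ n (k + 1) m ?_ ?_ ?_ ?_ (hL (μ * ((n : ℤ) : ℝ)))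
      · push_cast; linarith
      · push_cast; linarith
      · push_cast; linarith
      · push_cast; linarith
  · intro hdisj x
    by_contra h
    push_neg at h
    set p := ⌊(-1 / μ) * x⌋ with hp
    set q := ⌊(-ν / μ) * x⌋ with hq
    have hb : (-ν / μ) * x = ν * ((-1 / μ) * x) := by ring
    have hp1 : (p : ℝ) ≤ (-1 / μ) * x := Int.floor_le _
    have hp2 : (-1 / μ) * x < p + 1 := Int.lt_floor_add_one _
    have hq1 : (q : ℝ) ≤ ν * ((-1 / μ) * x) := by rw [← hb]; exact Int.floor_le _
    have hq2 : ν * ((-1 / μ) * x) < q + 1 := by rw [← hb]; exact Int.lt_floor_add_one _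
    have hq3 : (q : ℝ) < ν * p := by
      by_contra hc
      push_neg at hc
      have : (-1 / μ) * (q : ℝ) ≤ (-ν / μ) * (p : ℝ) := by
        rw [div_mul_eq_mul_div, div_mul_eq_mul_div, div_le_div_iff₀ hμ hμ]
        nlinarith
      exact absurd (Int.floor_le_floor this) (by omega)
    have hq4 : ν * (p : ℝ) - 1 < q := by nlinarith
    set m := ⌊(-1 / μ) * (q : ℝ)⌋ with hm
    have hm1 : (m : ℝ) * μ ≤ -q := by
      have t : (m : ℝ) ≤ (-1 / μ) * q := Int.floor_le _
      have t2 := mul_le_mul_of_nonneg_right t hμ.le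
      have t3 : (-1 / μ) * (q : ℝ) * μ = -q := by field_simp
      rw [t3] at t2
      exact t2
    have hm2 : -(ν * (p : ℝ)) < m * μ := by
      have h5 : ((-ν / μ) * (p : ℝ)) < m := by
        have h6 : ⌊(-ν / μ) * (p : ℝ)⌋ + 1 ≤ m := Int.add_one_le_iff.mpr h
        calc (-ν / μ) * (p : ℝ) < ⌊(-ν / μ) * (p : ℝ)⌋ + 1 := Int.lt_floor_add_one _
          _ ≤ m := by exact_mod_cast h6
      have t2 := mul_lt_mul_of_pos_right h5 hμ
      have t3 : (-ν / μ) * (p : ℝ) * μ = -(ν * p) := by field_simp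
      rw [t3] at t2
      exact t2
    have hmem : ((m : ℝ) * μ, ((-p : ℤ) : ℝ) * ν) ∈ Dprime := by
      simp only [Dprime, Set.mem_iUnion, Set.mem_setOf_eq]
      refine ⟨-q - 1, ?_, ?_, ?_, ?_, ?_⟩
      · push_cast; linarith
      · push_cast; linarith
      · push_cast; linarith
      · push_cast; linarith
      · push_cast; nlinarith
    exact Set.disjoint_left.mp hdisj ⟨m, -p, rfl⟩ hmem
end

section
/- Let r ≥ 2 be an integer and let u, v be real numbers with 1 + u > v. Define the lattices Λ = {a·(1+u, v) + b·(1, 1) : a, b ∈ ℤ} and Λ^(r) = {a·(1 + u/r, v/r) + b·(1/r, 1/r) : a, b ∈ ℤ} in ℝ². Then the following are equivalent: (S1′) Λ is disjoint from D ∪ D′; (S2′) Λ is disjoint from D′; (S3′) Λ^(r) is disjoint from D′. -/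
/-!
Both lattices are invariant under negation and under `(x, y) ↦ (x + 1, y + 1)` (resp. `+ 1/r`),
and so is `D′`; the only lattice points on the diagonal are integer points `(b, b)`, which lie
outside `D`, so `D` adds nothing to `D′`. Up to sign, a lattice point `a (1 + u, v) + b (1, 1)`
with `a > 0` lies in `D′` exactly when some integer `k` satisfies `u ≤ k < v`: for `a = 1` this is
the point `(1 + u, v)` in the cell of `k`, and for larger `a` the integers `a ⌈u⌉` separate
`a v` from `a (1 + u)`. In `Λ^(r)` the coordinates differ by `a (r + u - v) / r`, which is `< 1`
only for `a = ±1` because `r ≥ 2`, and the case `a = 1` again gives such a `k`.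
-/

/-- The approximate diagonal `D`. -/
def Dset : Set (ℝ × ℝ) :=
  ⋃ n : ℤ, {p : ℝ × ℝ | (n : ℝ) < p.1 ∧ p.1 < (n : ℝ) + 1 ∧
    (n : ℝ) < p.2 ∧ p.2 < (n : ℝ) + 1}

/-- The lattice `Λ` spanned over `ℤ` by `(1+u, v)` and `(1, 1)`. -/
def Lam (u v : ℝ) : Set (ℝ × ℝ) :=
  {p : ℝ × ℝ | ∃ a b : ℤ, p = ((a : ℝ) * (1 + u) + (b : ℝ), (a : ℝ) * v + (b : ℝ))}

/-- The lattice `Λ^(r)` spanned over `ℤ` by `(1 + u/r, v/r)` and `(1/r, 1/r)`. -/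
def LamR (r : ℤ) (u v : ℝ) : Set (ℝ × ℝ) :=
  {p : ℝ × ℝ | ∃ a b : ℤ,
    p = ((a : ℝ) * (1 + u / (r : ℝ)) + (b : ℝ) / (r : ℝ),
         (a : ℝ) * (v / (r : ℝ)) + (b : ℝ) / (r : ℝ))}

open Set

lemma fst_ne_snd_of_mem_Dprime {p : ℝ × ℝ} (h : p ∈ Dprime) : p.1 ≠ p.2 := by
  simp only [Dprime, mem_iUnion, mem_ofPred_eq] at h
  obtain ⟨-, -, -, -, -, hne⟩ := h
  exact hne

lemma neg_mem_Dprime {x y : ℝ} (h : (x, y) ∈ Dprime) : (-x, -y) ∈ Dprime := by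
  simp only [Dprime, mem_iUnion, mem_ofPred_eq] at h ⊢
  obtain ⟨n, h₁, h₂, h₃, h₄, hne⟩ := h
  refine ⟨-n - 1, ?_, ?_, ?_, ?_, neg_injective.ne hne⟩ <;> push_cast <;> linarith

lemma mem_Dprime_of_mem_Dset {p : ℝ × ℝ} (hD : p ∈ Dset) (hne : p.1 ≠ p.2) : p ∈ Dprime := by
  simp only [Dset, Dprime, mem_iUnion, mem_ofPred_eq] at hD ⊢
  obtain ⟨n, h₁, h₂, h₃, h₄⟩ := hD
  exact ⟨n, h₁.le, h₂.le, h₃, h₄, hne⟩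

lemma intCast_diag_notMem_Dset (b : ℤ) : ((b : ℝ), (b : ℝ)) ∉ Dset := by
  simp only [Dset, mem_iUnion, mem_ofPred_eq, not_exists]
  rintro n ⟨h₁, h₂, -, -⟩
  have : n < b := by exact_mod_cast h₁
  have : b < n + 1 := by exact_mod_cast h₂
  omega

section

variable {u v : ℝ}

lemma Lam_inter_Dset_subset_Dprime (huv : 1 + u ≠ v) : Lam u v ∩ Dset ⊆ Dprime := by
  rintro _ ⟨⟨a, b, rfl⟩, hD⟩
  refine mem_Dprime_of_mem_Dset hD fun hxy => ?_
  have ha : (a : ℝ) = 0 :=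
    (mul_eq_zero.mp (by linarith : (a : ℝ) * (1 + u - v) = 0)).resolve_right
      (sub_ne_zero.mpr huv)
  rw [ha, zero_mul, zero_add, zero_mul, zero_add] at hD
  exact intCast_diag_notMem_Dset b hD

lemma disjoint_Lam_Dset_union_Dprime_iff (huv : 1 + u ≠ v) :
    Disjoint (Lam u v) (Dset ∪ Dprime) ↔ Disjoint (Lam u v) Dprime := by
  rw [disjoint_union_right, and_iff_right_iff_imp]
  exact fun h => disjoint_left.2 fun _ hΛ hD =>
    disjoint_left.1 h hΛ (Lam_inter_Dset_subset_Dprime huv ⟨hΛ, hD⟩)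

lemma exists_intCast_mem_Ico_of_Lam_point_mem_Dprime {a b : ℤ} (ha : 0 < a)
    (h : ((a : ℝ) * (1 + u) + b, (a : ℝ) * v + b) ∈ Dprime) : ∃ k : ℤ, (k : ℝ) ∈ Ico u v := by
  simp only [Dprime, mem_iUnion, mem_ofPred_eq] at h
  obtain ⟨n, -, hx, hy, -, -⟩ := h
  refine ⟨⌈u⌉, Int.le_ceil u, ?_⟩
  by_contra! hv
  have haR : (0 : ℝ) < a := by exact_mod_cast ha
  -- `a v ≤ a ⌈u⌉` is an integer strictly above `n - b`, but `a (1 + u) > a ⌈u⌉` is at most `n - b + 1`.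
  have hlt : n - b < a * ⌈u⌉ := by
    have : (n : ℝ) - b < a * ⌈u⌉ := by nlinarith
    exact_mod_cast this
  have hle : ((n - b + 1 : ℤ) : ℝ) ≤ a * ⌈u⌉ := by exact_mod_cast hlt
  push_cast at hle
  nlinarith [Int.ceil_lt_add_one u]

lemma exists_intCast_mem_Ico_of_LamR_point_mem_Dprime {r : ℤ} (hr : 2 ≤ r) (huv : v < 1 + u)
    {a b : ℤ} (ha : 0 < a)
    (h : ((a : ℝ) * (1 + u / r) + b / r, (a : ℝ) * (v / r) + b / r) ∈ Dprime) :
    ∃ k : ℤ, (k : ℝ) ∈ Ico u v := by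
  have hr2 : (2 : ℝ) ≤ r := by exact_mod_cast hr
  have hr0 : (0 : ℝ) < r := by linarith
  simp only [Dprime, mem_iUnion, mem_ofPred_eq] at h
  obtain ⟨n, -, hx, hy, -, -⟩ := h
  rw [show (a : ℝ) * (1 + u / r) + b / r = (a * (r + u) + b) / r by field_simp,
    div_le_iff₀ hr0] at hx
  rw [show (a : ℝ) * (v / r) + b / r = (a * v + b) / r by field_simp, lt_div_iff₀ hr0] at hy
  -- A point of `D′` has `x - y < 1`, while `x - y = a (r + u - v) / r > a (r - 1) / r ≥ a / 2`.
  have ha1 : a = 1 := by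
    by_contra hne
    have : (2 : ℝ) ≤ a := by exact_mod_cast (show 2 ≤ a by omega)
    nlinarith
  subst ha1
  push_cast at hx hy
  exact ⟨r * n - b, by push_cast; linarith, by push_cast; linarith⟩

lemma not_disjoint_Lam_Dprime_iff (huv : v < 1 + u) :
    ¬Disjoint (Lam u v) Dprime ↔ ∃ k : ℤ, (k : ℝ) ∈ Ico u v := by
  rw [not_disjoint_iff]
  constructor
  · rintro ⟨_, ⟨a, b, rfl⟩, hD⟩
    rcases lt_trichotomy a 0 with ha | rfl | ha
    · refine exists_intCast_mem_Ico_of_Lam_point_mem_Dprime (a := -a) (b := -b) (by omega) ?_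
      convert neg_mem_Dprime hD using 2 <;> push_cast <;> ring
    · exact absurd (by simp) (fst_ne_snd_of_mem_Dprime hD)
    · exact exists_intCast_mem_Ico_of_Lam_point_mem_Dprime ha hD
  · rintro ⟨k, hku, hkv⟩
    refine ⟨(1 + u, v), ⟨1, 0, by simp⟩, ?_⟩
    simp only [Dprime, mem_iUnion, mem_ofPred_eq]
    exact ⟨k, by linarith, by linarith, hkv, by linarith, by linarith⟩

lemma not_disjoint_LamR_Dprime_iff {r : ℤ} (hr : 2 ≤ r) (huv : v < 1 + u) :
    ¬Disjoint (LamR r u v) Dprime ↔ ∃ k : ℤ, (k : ℝ) ∈ Ico u v := by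
  have hr2 : (2 : ℝ) ≤ r := by exact_mod_cast hr
  have hr0 : (0 : ℝ) < r := by linarith
  rw [not_disjoint_iff]
  constructor
  · rintro ⟨_, ⟨a, b, rfl⟩, hD⟩
    rcases lt_trichotomy a 0 with ha | rfl | ha
    · refine exists_intCast_mem_Ico_of_LamR_point_mem_Dprime hr huv (a := -a) (b := -b)
        (by omega) ?_
      convert neg_mem_Dprime hD using 2 <;> push_cast <;> ring
    · exact absurd (by simp) (fst_ne_snd_of_mem_Dprime hD)
    · exact exists_intCast_mem_Ico_of_LamR_point_mem_Dprime hr huv ha hD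
  · rintro ⟨k, hku, hkv⟩
    refine ⟨((r + u - k) / r, (v - k) / r), ⟨1, -k, by push_cast; ext <;> field_simp <;> ring⟩, ?_⟩
    simp only [Dprime, mem_iUnion, mem_ofPred_eq]
    refine ⟨0, ?_, ?_, ?_, ?_, ?_⟩
    · push_cast; apply div_nonneg <;> linarith
    · rw [div_le_iff₀ hr0]; push_cast; linarith
    · push_cast; apply div_pos <;> linarith
    · rw [div_lt_iff₀ hr0]; push_cast; linarith
    · exact fun h => by rw [div_left_inj' hr0.ne'] at h; linarith

end

theorem diagonal_expansion_contraction (r : ℤ) (hr : 2 ≤ r) (u v : ℝ) (huv : 1 + u > v) :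
    (Disjoint (Lam u v) (Dset ∪ Dprime) ↔ Disjoint (Lam u v) Dprime) ∧
    (Disjoint (Lam u v) Dprime ↔ Disjoint (LamR r u v) Dprime) := by
  refine ⟨disjoint_Lam_Dset_union_Dprime_iff huv.ne', ?_⟩
  rw [← not_iff_not, not_disjoint_Lam_Dprime_iff huv, not_disjoint_LamR_Dprime_iff hr huv]
end

section
/- Let p, q ≥ 1 be coprime integers and let ℓ > 0 be an irrational real number. Then the lattice Λ_{ℓp, ℓq} = {(m·ℓp, n·ℓq) : m, n ∈ ℤ} is disjoint from D′ if and only if ℓ > 1. -/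
/-- `ℤ + βℤ` is dense when `β` is irrational. -/
lemma dense_one_beta {β : ℝ} (hβ : Irrational β) :
    Dense ((AddSubgroup.closure ({1, β} : Set ℝ) : AddSubgroup ℝ) : Set ℝ) := by
  rcases AddSubgroup.dense_or_cyclic (AddSubgroup.closure ({1, β} : Set ℝ)) with h | ⟨a, ha⟩
  · exact h
  · exfalso
    have h1 : (1 : ℝ) ∈ AddSubgroup.closure ({1, β} : Set ℝ) :=
      AddSubgroup.subset_closure (by simp)
    have hb : β ∈ AddSubgroup.closure ({1, β} : Set ℝ) :=
      AddSubgroup.subset_closure (by simp)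
    rw [ha, AddSubgroup.mem_closure_singleton] at h1 hb
    obtain ⟨m, hm⟩ := h1
    obtain ⟨n, hn⟩ := hb
    have hm0 : m ≠ 0 := by
      rintro rfl; simp at hm
    have : β = (n : ℝ) / (m : ℝ) := by
      have hma : (m : ℝ) * a = 1 := by simpa [zsmul_eq_mul] using hm
      have hna : (n : ℝ) * a = β := by simpa [zsmul_eq_mul] using hn
      have hmR : (m : ℝ) ≠ 0 := Int.cast_ne_zero.mpr hm0
      have hmb : (m : ℝ) * β = n := by linear_combination n * hma - m * hna
      rw [eq_div_iff hmR]
      linear_combination hmb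
    exact (hβ ⟨(n : ℚ) / (m : ℚ), by push_cast [this]; ring⟩).elim

theorem irrational_lattice_disjointness (p q : ℤ) (hp : 1 ≤ p) (hq : 1 ≤ q)
    (hpq : IsCoprime p q) (ℓ : ℝ) (hℓ : 0 < ℓ) (hirr : Irrational ℓ) :
    Disjoint (RectLat (ℓ * (p : ℝ)) (ℓ * (q : ℝ))) Dprime ↔ 1 < ℓ := by
  constructor
  · intro hdisj
    by_contra hle
    push_neg at hle
    have hℓ1 : ℓ < 1 := lt_of_le_of_ne hle (fun h => hirr ⟨1, by simp [h]⟩)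
    -- Bezout
    obtain ⟨u, v, huv⟩ := hpq
    set β : ℝ := ℓ * ((p : ℝ) * (q : ℝ)) with hβdef
    have hpq0 : p * q ≠ 0 := by positivity
    have hβirr : Irrational β := by
      have := hirr.mul_intCast (m := p * q) hpq0
      simpa [hβdef, mul_assoc] using this
    have hdense := dense_one_beta hβirr
    set c : ℝ := ℓ * (v : ℝ) * (q : ℝ) with hcdef
    have hne : (Set.Ioo c (c + (1 - ℓ))).Nonempty := ⟨c + (1 - ℓ)/2, by constructor <;> nlinarith⟩
    obtain ⟨z, hzS, hzI⟩ := hdense.exists_mem_open isOpen_Ioo hne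
    rw [SetLike.mem_coe, AddSubgroup.mem_closure_pair] at hzS
    obtain ⟨k', t, hz⟩ := hzS
    simp only [zsmul_eq_mul, mul_one] at hz
    -- the lattice point
    set m : ℤ := u + t * q with hmdef
    set n : ℤ := -v + t * p with hndef
    set y : ℝ := (n : ℝ) * (ℓ * (q : ℝ)) with hydef
    set x : ℝ := (m : ℝ) * (ℓ * (p : ℝ)) with hxdef
    have hyz : y = z - (k' : ℝ) - c := by
      rw [hydef, ← hz, hndef, hcdef, hβdef]
      push_cast
      ring
    have hxy : x = y + ℓ := by
      have h1 : (m : ℝ) * p - (n : ℝ) * q = 1 := by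
        have : m * p - n * q = 1 := by rw [hmdef, hndef]; linear_combination huv
        exact_mod_cast congrArg (Int.cast : ℤ → ℝ) this
      rw [hxdef, hydef]
      nlinarith [h1]
    set k : ℤ := -k' with hkdef
    have hky : (k : ℝ) < y := by
      have := hzI.1
      rw [hyz, hkdef]; push_cast; linarith
    have hyk : y < (k : ℝ) + 1 - ℓ := by
      have := hzI.2
      rw [hyz, hkdef]; push_cast; linarith
    have hmem1 : ((x, y) : ℝ × ℝ) ∈ RectLat (ℓ * (p : ℝ)) (ℓ * (q : ℝ)) := ⟨m, n, rfl⟩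
    have hmem2 : ((x, y) : ℝ × ℝ) ∈ Dprime := by
      refine Set.mem_iUnion.mpr ⟨k, ?_, ?_, ?_, ?_, ?_⟩
      · simp only; linarith [hxy, hky, hℓ.le]
      · simp only; linarith [hxy, hyk]
      · simpa using hky
      · simp only; linarith [hyk, hℓ]
      · simp only; intro h; rw [hxy] at h; linarith
    exact Set.disjoint_left.mp hdisj hmem1 hmem2
  · intro hℓ1
    rw [Set.disjoint_left]
    rintro ⟨x, y⟩ ⟨m, n, hmn⟩ hD
    obtain ⟨k, hk1, hk2, hk3, hk4, hk5⟩ := Set.mem_iUnion.mp hD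
    simp only [Prod.mk.injEq] at hmn
    obtain ⟨hx, hy⟩ := hmn
    simp only at hk1 hk2 hk3 hk4 hk5
    subst hx hy
    by_cases hmn : m * p = n * q
    · apply hk5
      have : (m : ℝ) * p = (n : ℝ) * q := by exact_mod_cast hmn
      nlinarith [this]
    · have h1 : (1 : ℤ) ≤ |m * p - n * q| := Int.one_le_abs (sub_ne_zero.mpr hmn)
      have h1R : (1 : ℝ) ≤ |(m : ℝ) * p - (n : ℝ) * q| := by
        have : (1 : ℝ) ≤ |((m * p - n * q : ℤ) : ℝ)| := by
          rw [← Int.cast_abs]; exact_mod_cast h1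
        simpa [Int.cast_sub, Int.cast_mul] using this
      have hdiff : |(m : ℝ) * (ℓ * p) - (n : ℝ) * (ℓ * q)| = ℓ * |(m : ℝ) * p - (n : ℝ) * q| := by
        have h := abs_mul ℓ ((m : ℝ) * p - (n : ℝ) * q)
        rw [abs_of_pos hℓ] at h
        rw [← h]; congr 1; ring
      have hlt : |(m : ℝ) * (ℓ * p) - (n : ℝ) * (ℓ * q)| < 1 := by
        rw [abs_sub_lt_iff]; constructor <;> linarith
      have : ℓ ≤ ℓ * |(m : ℝ) * p - (n : ℝ) * q| := le_mul_of_one_le_right hℓ.le h1R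
      linarith [hdiff ▸ hlt]
end

section
/- Let μ, ν > 0 be rational numbers. Then the lattice Λ_{μ,ν} = {(mμ, nν) : m, n ∈ ℤ} is disjoint from D ∪ D′ if and only if there exist integers m ≥ 0 and n ≥ 1 such that m/μ + n/ν = 1. -/
/-- If `v` is in range and `g ∣ X - v` then `X % g = v`. -/
lemma emod_eq_of_dvd_sub {g X v : ℤ} (h0 : 0 ≤ v) (h1 : v < g) (h : g ∣ X - v) :
    X % g = v := by
  obtain ⟨k, hk⟩ := h
  have hX : X = v + g * k := by linarith
  rw [hX, Int.add_mul_emod_self_left, Int.emod_eq_of_lt h0 h1]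

/-- Window lemma: only `b` can land in the lower window `[0, r]`. -/
lemma window_lemma {g y a e b r w : ℤ}
    (ha : 1 ≤ a) (he : 1 ≤ e) (hb : 1 ≤ b) (hr : 1 ≤ r)
    (I1 : e * b + r * a = g)
    (I3a : (a * y) % g = g - e) (I3b : (b * y) % g = r)
    (hw1 : 1 ≤ w) (hw2 : w < a + b) (ht : (w * y) % g ≤ r) :
    w = b := by
  have hg : 0 < g := by nlinarith
  set t := (w * y) % g with htdef
  have ht0 : 0 ≤ t := Int.emod_nonneg _ (by positivity)
  obtain ⟨k1, hk1⟩ : g ∣ a * y - (g - e) := Int.dvd_self_sub_of_emod_eq I3a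
  obtain ⟨k2, hk2⟩ : g ∣ b * y - r := Int.dvd_self_sub_of_emod_eq I3b
  obtain ⟨k3, hk3⟩ : g ∣ w * y - t := Int.dvd_self_sub_of_emod_eq rfl
  set x : ℤ := w * k1 + w - k3 * a with hxdef
  set z : ℤ := k3 * b - w * k2 with hzdef
  have hxg : x * g = w * e + t * a := by
    rw [hxdef]; linear_combination a * hk3 - w * hk1
  have hzg : z * g = w * r - t * b := by
    rw [hzdef]; linear_combination w * hk2 - b * hk3
  have hw_eq : w = x * b + z * a := by
    have h2 : (x * b + z * a) * g = w * g := by linear_combination b * hxg + a * hzg + w * I1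
    exact (mul_right_cancel₀ (by positivity) h2).symm
  have ht_eq : t = x * r - z * e := by
    have h2 : (x * r - z * e) * g = t * g := by linear_combination r * hxg - e * hzg + t * I1
    exact (mul_right_cancel₀ (by positivity) h2).symm
  rcases lt_trichotomy z 0 with hz | hz | hz
  · have hz1 : z ≤ -1 := by omega
    have hx1 : 1 ≤ x := by nlinarith
    exfalso; nlinarith
  · rw [hz] at hw_eq ht_eq
    have hx1 : 1 ≤ x := by nlinarith
    have hx2 : x ≤ 1 := by nlinarith
    have hx : x = 1 := le_antisymm hx2 hx1
    rw [hx] at hw_eq; omega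
  · have hz1 : 1 ≤ z := hz
    have hx1 : 1 ≤ x := by nlinarith
    exfalso; nlinarith

lemma chain_lemma (g y d q : ℤ) (hg : 0 < g) (hq : 1 ≤ q) (hd : 1 ≤ d)
    (hdy : (d * y) % g = q) (hw : ∀ w : ℤ, 1 ≤ w → w < d → q < (w * y) % g) :
    ∀ N : ℕ, ∀ a e b r : ℤ, 1 ≤ a → 1 ≤ e → 1 ≤ b → 1 ≤ r →
      e * b + r * a = g → (a * y) % g = g - e → (b * y) % g = r → b ≤ d →
      2 * d - a - 2 * b ≤ (N : ℤ) →
      ∃ s j : ℤ, 1 ≤ s ∧ 1 ≤ j ∧ s * q + j * d = g := by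
  intro N
  induction N with
  | zero =>
    intro a e b r ha he hb hr I1 I3a I3b hbd hN
    by_cases hbeq : b = d
    · subst hbeq
      refine ⟨a, e, ha, he, ?_⟩
      have hrq : r = q := by rw [← I3b, hdy]
      rw [← hrq]; linarith [I1]
    · -- derive a + b ≤ d, contradiction with measure ≤ 0
      have hblt : b < d := lt_of_le_of_ne hbd hbeq
      have habd : a + b ≤ d := by
        by_contra hcon
        push_neg at hcon
        have hqr : q < r := by have := hw b hb hblt; rwa [I3b] at this
        have := window_lemma ha he hb hr I1 I3a I3b (by linarith) hcon (by rw [hdy]; linarith)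
        omega
      omega
  | succ N ih =>
    intro a e b r ha he hb hr I1 I3a I3b hbd hN
    by_cases hbeq : b = d
    · subst hbeq
      refine ⟨a, e, ha, he, ?_⟩
      have hrq : r = q := by rw [← I3b, hdy]
      rw [← hrq]; linarith [I1]
    · have hblt : b < d := lt_of_le_of_ne hbd hbeq
      have hqr : q < r := by have := hw b hb hblt; rwa [I3b] at this
      have habd : a + b ≤ d := by
        by_contra hcon
        push_neg at hcon
        have := window_lemma ha he hb hr I1 I3a I3b (by linarith) hcon (by rw [hdy]; linarith)
        omega
      obtain ⟨k1, hk1⟩ : g ∣ a * y - (g - e) := Int.dvd_self_sub_of_emod_eq I3a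
      obtain ⟨k2, hk2⟩ : g ∣ b * y - r := Int.dvd_self_sub_of_emod_eq I3b
      have hrg : r < g := by rw [← I3b]; exact Int.emod_lt_of_pos _ hg
      have heg : e < g := by nlinarith
      have hre : r ≠ e := by
        intro hcon
        have hz : ((a + b) * y) % g = 0 := by
          rw [show (a+b) * y = g * (k1 + k2 + 1) by rw [hcon] at hk2; linarith [hk1, hk2]]
          exact Int.mul_emod_right _ _
        rcases lt_or_eq_of_le habd with h | h
        · have := hw (a+b) (by linarith) h; rw [hz] at this; linarith
        · rw [h] at hz; rw [hz] at hdy; linarith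
      rcases lt_or_gt_of_ne hre with hlt | hgt
      · -- r < e : replace a by a + b
        have I3a' : ((a + b) * y) % g = g - (e - r) := by
          apply emod_eq_of_dvd_sub (by linarith) (by linarith)
          exact ⟨k1 + k2, by linarith [hk1, hk2]⟩
        exact ih (a+b) (e-r) b r (by linarith) (by linarith) hb hr
          (by linarith [I1]) I3a' I3b hbd (by push_cast; push_cast at hN; linarith)
      · -- r > e : replace b by a + b
        have I3b' : ((a + b) * y) % g = r - e := by
          apply emod_eq_of_dvd_sub (by linarith) (by linarith)
          exact ⟨k1 + k2 + 1, by linarith [hk1, hk2]⟩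
        exact ih a e (a+b) (r-e) ha he (by linarith) (by linarith)
          (by linarith [I1]) I3a I3b' habd (by push_cast; push_cast at hN; linarith)

lemma master_lemma (g y d q : ℤ) (hg : 0 < g) (hq : 1 ≤ q) (hd : 1 ≤ d)
    (hdy : (d * y) % g = q) (hw : ∀ w : ℤ, 1 ≤ w → w < d → q < (w * y) % g) :
    ∃ s j : ℤ, 1 ≤ s ∧ 1 ≤ j ∧ s * q + j * d = g := by
  have hy0 : 1 ≤ y % g := by
    rcases lt_or_eq_of_le (Int.emod_nonneg y (ne_of_gt hg)) with h | h
    · linarith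
    · exfalso
      obtain ⟨k, hk⟩ : g ∣ y - 0 := Int.dvd_self_sub_of_emod_eq h.symm
      have : (d * y) % g = 0 := by
        rw [show d * y = g * (d*k) by nlinarith [hk]]
        exact Int.mul_emod_right _ _
      rw [this] at hdy; linarith
  have hyg : y % g < g := Int.emod_lt_of_pos _ hg
  have I3 : (1 * y) % g = y % g := by rw [one_mul]
  refine chain_lemma g y d q hg hq hd hdy hw (2*d).toNat 1 (g - (y % g)) 1 (y % g)
    le_rfl (by linarith) le_rfl hy0 (by ring) ?_ I3 hd ?_
  · rw [one_mul]; ring_nf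
  · have h2d : (0:ℤ) ≤ 2*d := by linarith
    rw [Int.toNat_of_nonneg h2d]; linarith

lemma mem_region_iff (P : ℝ × ℝ) : P ∈ Dset ∪ Dprime ↔
    ∃ k : ℤ, (k:ℝ) ≤ P.1 ∧ P.1 ≤ (k:ℝ) + 1 ∧ (k:ℝ) < P.2 ∧ P.2 < (k:ℝ) + 1 := by
  constructor
  · rintro (h | h)
    · simp only [Dset, Set.mem_iUnion, Set.mem_setOf_eq] at h
      obtain ⟨k, h1, h2, h3, h4⟩ := h
      exact ⟨k, h1.le, h2.le, h3, h4⟩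
    · simp only [Dprime, Set.mem_iUnion, Set.mem_setOf_eq] at h
      obtain ⟨k, h1, h2, h3, h4, _⟩ := h
      exact ⟨k, h1, h2, h3, h4⟩
  · rintro ⟨k, h1, h2, h3, h4⟩
    by_cases hxy : P.1 = P.2
    · left
      simp only [Dset, Set.mem_iUnion, Set.mem_setOf_eq]
      exact ⟨k, by rw [hxy]; exact h3, by rw [hxy]; exact h4, h3, h4⟩
    · right
      simp only [Dprime, Set.mem_iUnion, Set.mem_setOf_eq]
      exact ⟨k, h1, h2, h3, h4, hxy⟩

lemma easy_direction (μ ν : ℚ) (hμ : 0 < μ) (hν : 0 < ν)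
    (h : ∃ m n : ℤ, 0 ≤ m ∧ 1 ≤ n ∧ (m : ℝ) / (μ : ℝ) + (n : ℝ) / (ν : ℝ) = 1) :
    Disjoint (RectLat (μ : ℝ) (ν : ℝ)) (Dset ∪ Dprime) := by
  obtain ⟨m, n, hm, hn, heq⟩ := h
  rw [Set.disjoint_left]
  intro P hP hmem
  obtain ⟨a, b, rfl⟩ := hP
  rw [mem_region_iff] at hmem
  obtain ⟨k, h1, h2, h3, h4⟩ := hmem
  simp only at h1 h2 h3 h4
  have hμ0 : (0:ℝ) < (μ:ℝ) := by exact_mod_cast hμ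
  have hν0 : (0:ℝ) < (ν:ℝ) := by exact_mod_cast hν
  set A : ℝ := (m:ℝ)/(μ:ℝ) with hA
  set B : ℝ := (n:ℝ)/(ν:ℝ) with hB
  have hA0 : 0 ≤ A := div_nonneg (by exact_mod_cast hm) hμ0.le
  have hB0 : 0 < B := div_pos (by exact_mod_cast (by linarith : (1:ℤ) ≤ n)) hν0
  have hid : (m:ℝ)*a + (n:ℝ)*b = A*((a:ℝ)*μ) + B*((b:ℝ)*ν) := by
    rw [hA, hB]; field_simp
  have l1 : A*(k:ℝ) ≤ A*((a:ℝ)*μ) := mul_le_mul_of_nonneg_left h1 hA0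
  have l2 : B*(k:ℝ) < B*((b:ℝ)*ν) := mul_lt_mul_of_pos_left h3 hB0
  have u1 : A*((a:ℝ)*μ) ≤ A*((k:ℝ)+1) := mul_le_mul_of_nonneg_left h2 hA0
  have u2 : B*((b:ℝ)*ν) < B*((k:ℝ)+1) := mul_lt_mul_of_pos_left h4 hB0
  have hsum : A + B = 1 := heq
  have e1 : A*(k:ℝ) + B*(k:ℝ) = (k:ℝ) := by
    calc A*(k:ℝ) + B*(k:ℝ) = (A+B)*(k:ℝ) := by ring
    _ = (k:ℝ) := by rw [hsum]; ring
  have e2 : A*((k:ℝ)+1) + B*((k:ℝ)+1) = (k:ℝ)+1 := by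
    calc A*((k:ℝ)+1) + B*((k:ℝ)+1) = (A+B)*((k:ℝ)+1) := by ring
    _ = (k:ℝ)+1 := by rw [hsum]; ring
  have lower : (k:ℝ) < (m:ℝ)*a + (n:ℝ)*b := by linarith
  have upper : (m:ℝ)*a + (n:ℝ)*b < (k:ℝ) + 1 := by linarith
  have cl : (k:ℤ) < m*a + n*b := by exact_mod_cast (by push_cast; linarith : (k:ℝ) < ((m*a + n*b : ℤ):ℝ))
  have cu : (m*a + n*b : ℤ) < k + 1 := by
    exact_mod_cast (by push_cast; linarith : ((m*a + n*b : ℤ):ℝ) < ((k+1 : ℤ):ℝ))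
  omega

set_option maxHeartbeats 1600000 in
lemma hard_direction (μ ν : ℚ) (hμ : 0 < μ) (hν : 0 < ν)
    (hdisj : Disjoint (RectLat (μ : ℝ) (ν : ℝ)) (Dset ∪ Dprime)) :
    ∃ m n : ℤ, 0 ≤ m ∧ 1 ≤ n ∧ (m : ℝ) / (μ : ℝ) + (n : ℝ) / (ν : ℝ) = 1 := by
  set p : ℤ := μ.num with hpdef
  set q : ℤ := (μ.den : ℤ) with hqdef
  set c : ℤ := ν.num with hcdef
  set d : ℤ := (ν.den : ℤ) with hddef
  have hp : 0 < p := Rat.num_pos.mpr hμ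
  have hc : 0 < c := Rat.num_pos.mpr hν
  have hq : 0 < q := by rw [hqdef]; exact_mod_cast μ.pos
  have hd : 0 < d := by rw [hddef]; exact_mod_cast ν.pos
  have hcast_μ : (μ:ℝ) = (p:ℝ)/(q:ℝ) := by
    rw [Rat.cast_def, hpdef, hqdef]; norm_cast
  have hcast_ν : (ν:ℝ) = (c:ℝ)/(d:ℝ) := by
    rw [Rat.cast_def, hcdef, hddef]; norm_cast
  have hq0 : (0:ℝ) < (q:ℝ) := by exact_mod_cast hq
  have hd0 : (0:ℝ) < (d:ℝ) := by exact_mod_cast hd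
  have star : ∀ a b k : ℤ, k*q ≤ a*p → a*p ≤ k*q + q → k*d < b*c → b*c < k*d + d → False := by
    intro a b k h1 h2 h3 h4
    have r1 : (k:ℝ) ≤ (a:ℝ)*(μ:ℝ) := by
      rw [hcast_μ, mul_div_assoc', le_div_iff₀ hq0]
      exact_mod_cast h1
    have r2 : (a:ℝ)*(μ:ℝ) ≤ (k:ℝ) + 1 := by
      rw [hcast_μ, mul_div_assoc', div_le_iff₀ hq0]
      have h2' : ((a*p : ℤ):ℝ) ≤ ((k*q + q : ℤ):ℝ) := by exact_mod_cast h2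
      push_cast at h2' ⊢; linarith
    have r3 : (k:ℝ) < (b:ℝ)*(ν:ℝ) := by
      rw [hcast_ν, mul_div_assoc', lt_div_iff₀ hd0]
      exact_mod_cast h3
    have r4 : (b:ℝ)*(ν:ℝ) < (k:ℝ) + 1 := by
      rw [hcast_ν, mul_div_assoc', div_lt_iff₀ hd0]
      have h4' : ((b*c : ℤ):ℝ) < ((k*d + d : ℤ):ℝ) := by exact_mod_cast h4
      push_cast at h4' ⊢; linarith
    exact Set.disjoint_left.mp hdisj ⟨a, b, rfl⟩
      ((mem_region_iff (((a:ℝ)*(μ:ℝ), (b:ℝ)*(ν:ℝ)))).mpr ⟨k, r1, r2, r3, r4⟩)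
  by_cases hd1 : d = 1
  · -- ν is an integer
    refine ⟨0, c, le_rfl, by linarith, ?_⟩
    have hνc : (ν:ℝ) = (c:ℝ) := by rw [hcast_ν, hd1]; push_cast; ring
    have hc0 : (c:ℝ) ≠ 0 := by positivity
    rw [hνc]; push_cast
    rw [zero_div, div_self hc0, zero_add]
  have hd2 : 2 ≤ d := by omega
  -- coprimality and Bezout data
  have hcopμ : Int.gcd p q = 1 := by
    have h := μ.reduced
    rw [hpdef, hqdef]; simpa [Int.gcd] using h
  have hcopν : Int.gcd c d = 1 := by
    have h := ν.reduced
    rw [hcdef, hddef]; simpa [Int.gcd] using h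
  set G : ℤ := (Int.gcd p c : ℤ) with hGdef
  have hGpos : 0 < G := by
    rw [hGdef]
    have hne : Int.gcd p c ≠ 0 := by
      intro h
      rw [Int.gcd_eq_zero_iff] at h
      exact absurd h.1 (by omega)
    exact_mod_cast Nat.pos_of_ne_zero hne
  obtain ⟨p₁, hp₁⟩ : G ∣ p := Int.gcd_dvd_left _ _
  obtain ⟨c₁, hc₁⟩ : G ∣ c := Int.gcd_dvd_right _ _
  have hbez1 : (1:ℤ) = p * Int.gcdA p q + q * Int.gcdB p q := by
    have h := Int.gcd_eq_gcd_ab p q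
    rw [hcopμ] at h; exact_mod_cast h
  have hbez2 : (1:ℤ) = c * Int.gcdA c d + d * Int.gcdB c d := by
    have h := Int.gcd_eq_gcd_ab c d
    rw [hcopν] at h; exact_mod_cast h
  have hbez3 : G = p * Int.gcdA p c + c * Int.gcdB p c := by
    rw [hGdef]; exact Int.gcd_eq_gcd_ab p c
  have hcop_dG : Int.gcd d G = 1 := by
    have h1 : ((Int.gcd d G : ℤ)) ∣ d := Int.gcd_dvd_left _ _
    have h2 : ((Int.gcd d G : ℤ)) ∣ G := Int.gcd_dvd_right _ _
    have h3 : ((Int.gcd d G : ℤ)) ∣ c := h2.trans ⟨c₁, hc₁⟩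
    have h4 : ((Int.gcd d G : ℤ)) ∣ (Int.gcd d c : ℤ) := by exact_mod_cast Int.dvd_gcd h1 h3
    rw [Int.gcd_comm d c, hcopν] at h4
    have h5 : Int.gcd d G ∣ 1 := by exact_mod_cast h4
    exact Nat.dvd_one.mp h5
  have hbez4 : (1:ℤ) = d * Int.gcdA d G + G * Int.gcdB d G := by
    have h := Int.gcd_eq_gcd_ab d G
    rw [hcop_dG] at h; exact_mod_cast h
  set A' : ℤ := Int.gcdA p q with hA'def
  set B' : ℤ := Int.gcdB p q with hB'def
  set C1 : ℤ := Int.gcdA c d with hC1def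
  set C2 : ℤ := Int.gcdB c d with hC2def
  set AA : ℤ := Int.gcdA p c with hAAdef
  set BB : ℤ := Int.gcdB p c with hBBdef
  set D' : ℤ := Int.gcdA d G with hD'def
  set E' : ℤ := Int.gcdB d G with hE'def
  have hcop_dc : IsCoprime d c := by
    rw [Int.isCoprime_iff_gcd_eq_one, Int.gcd_comm]; exact hcopν
  -- no multiple of G in the window [f_v q, f_v q + q]
  have starP : ∀ v : ℤ, 1 ≤ v → v < d → ∀ t : ℤ,
      ((v*c)/d)*q ≤ t*G → t*G ≤ ((v*c)/d)*q + q → False := by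
    intro v hv1 hv2 t m1 m2
    set f : ℤ := (v*c)/d with hfdef
    have hfc : d * f + (v*c) % d = v*c := Int.mul_ediv_add_emod _ _
    -- the integer aa satisfies aa * p = t*G - (c*q)*uu
    set aa : ℤ := t*AA + t*BB*c*A' with haadef
    set uu : ℤ := t*BB*B' with huudef
    have key : aa * p + uu * (c*q) = t * G := by
      rw [haadef, huudef, hbez3]
      calc (t*AA + t*BB*c*A') * p + (t*BB*B') * (c*q)
          = t*p*AA + t*c*BB*(p*A' + q*B') := by ring
        _ = t*p*AA + t*c*BB*1 := by rw [← hbez1]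
        _ = t*(p*AA + c*BB) := by ring
    set w' : ℤ := (v*c) % d with hw'def
    have hw'0 : 0 ≤ w' := Int.emod_nonneg _ hd.ne'
    have hw'd : w' < d := Int.emod_lt_of_pos _ hd
    have hw'1 : 1 ≤ w' := by
      rcases lt_or_eq_of_le hw'0 with h | h
      · linarith
      · exfalso
        have hdvd : d ∣ v*c := Int.dvd_of_emod_eq_zero h.symm
        have : d ∣ v := hcop_dc.dvd_of_dvd_mul_right hdvd
        have := Int.le_of_dvd (by linarith) this
        omega
    -- apply star with the collision
    have key' : aa*p = t*G - uu*(c*q) := by linear_combination key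
    have expand : (f - uu*c)*q = f*q - uu*(c*q) := by ring
    have hbc : (v - uu*d)*c - (f - uu*c)*d = w' := by
      rw [hw'def]; linear_combination -hfc
    apply star aa (v - uu*d) (f - uu*c)
    · rw [key', expand]; linarith [m1]
    · rw [key', expand]; linarith [m2]
    · linarith [hbc, hw'1]
    · linarith [hbc, hw'd]
  -- the rotation hypothesis for the master lemma
  set y : ℤ := q * D' with hydef
  have hw : ∀ w : ℤ, 1 ≤ w → w < d → q < (w * y) % G := by
    intro w hw1 hw2
    set v : ℤ := (w*C1) % d with hvdef
    have hv0 : 0 ≤ v := Int.emod_nonneg _ hd.ne'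
    have hvd : v < d := Int.emod_lt_of_pos _ hd
    obtain ⟨X, hX⟩ : d ∣ w*C1 - v := Int.dvd_self_sub_of_emod_eq hvdef.symm
    have hv1 : 1 ≤ v := by
      rcases lt_or_eq_of_le hv0 with h | h
      · linarith
      · exfalso
        have hdw : d ∣ w := by
          refine ⟨c*X + w*C2, ?_⟩
          calc w = w * 1 := by ring
            _ = w * (c * C1 + d * C2) := by rw [← hbez2]
            _ = c * (w*C1 - v) + d*(w*C2) + c*v := by ring
            _ = c * (d*X) + d*(w*C2) + c*v := by rw [hX]
            _ = d * (c*X + w*C2) + c*v := by ring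
            _ = d * (c*X + w*C2) := by rw [← h]; ring
        have := Int.le_of_dvd (by linarith) hdw
        omega
    have hvcw : (v*c) % d = w := by
      apply emod_eq_of_dvd_sub (by linarith) hw2
      refine ⟨-(X*c) - w*C2, ?_⟩
      calc v*c - w = (w*C1 - d*X)*c - w := by linear_combination (-c) * hX
        _ = w*(c*C1 + d*C2) - w - d*(X*c) - d*(w*C2) := by ring
        _ = w*1 - w - d*(X*c) - d*(w*C2) := by rw [← hbez2]
        _ = d * (-(X*c) - w*C2) := by ring
    set f : ℤ := (v*c)/d with hfdef
    have hdf : d*f + w = v*c := by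
      conv_rhs => rw [← Int.mul_ediv_add_emod (v*c) d]
      rw [hvcw]
    -- G divides w*y + f*q
    have key2 : G ∣ w*y + f*q := by
      refine ⟨c₁*(q*D')*v + E'*(f*q), ?_⟩
      have hwv : w = v*c - d*f := by linarith [hdf]
      rw [hydef, hwv, hc₁]
      linear_combination (f*q) * hbez4
    set ρ : ℤ := (-(f*q)) % G with hρdef
    have hρ0 : 0 ≤ ρ := Int.emod_nonneg _ hGpos.ne'
    have hρG : ρ < G := Int.emod_lt_of_pos _ hGpos
    obtain ⟨k, hk⟩ : G ∣ (-(f*q)) - ρ := Int.dvd_self_sub_of_emod_eq hρdef.symm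
    have hdvdρ : G ∣ f*q + ρ := ⟨-k, by linarith [hk]⟩
    have hwyρ : (w*y) % G = ρ := by
      apply emod_eq_of_dvd_sub hρ0 hρG
      have : w*y - ρ = (w*y + f*q) - (f*q + ρ) := by ring
      rw [this]
      exact dvd_sub key2 hdvdρ
    rw [hwyρ]
    by_contra hcon
    push_neg at hcon
    obtain ⟨t, ht⟩ := hdvdρ
    exact starP v hv1 hvd t (by rw [← hfdef]; linarith [ht]) (by rw [← hfdef]; linarith [ht])
  have hqG : q < G := by
    have h1 := hw 1 le_rfl (by omega)
    have h2 : (1*y) % G < G := Int.emod_lt_of_pos _ hGpos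
    linarith
  have hdy : (d*y) % G = q := by
    apply emod_eq_of_dvd_sub (by linarith) hqG
    refine ⟨-(q*E'), ?_⟩
    rw [hydef]
    linear_combination (-q) * hbez4
  obtain ⟨s, j, hs, hj, hsum⟩ := master_lemma G y d q hGpos (by linarith) (by linarith) hdy hw
  have hp₁1 : 1 ≤ p₁ := by nlinarith [hp₁]
  have hc₁1 : 1 ≤ c₁ := by nlinarith [hc₁]
  refine ⟨p₁*s, c₁*j, by nlinarith, by nlinarith, ?_⟩
  have hintid : (p₁*s)*(q*c) + (c₁*j)*(d*p) = p*c := by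
    rw [hp₁, hc₁]; linear_combination (G*p₁*c₁) * hsum
  have hIR : ((p₁*s : ℤ):ℝ)*((q:ℝ)*(c:ℝ)) + ((c₁*j : ℤ):ℝ)*((d:ℝ)*(p:ℝ)) = (p:ℝ)*(c:ℝ) := by
    exact_mod_cast congrArg (fun z : ℤ => (z:ℝ)) hintid
  have hp0 : (p:ℝ) ≠ 0 := by positivity
  have hc0 : (c:ℝ) ≠ 0 := by positivity
  have hq0' : (q:ℝ) ≠ 0 := ne_of_gt hq0
  have hd0' : (d:ℝ) ≠ 0 := ne_of_gt hd0
  rw [hcast_μ, hcast_ν]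
  field_simp
  push_cast at hIR ⊢
  linear_combination hIR

theorem combined_disjointness_classification (μ ν : ℚ) (hμ : 0 < μ) (hν : 0 < ν) :
    Disjoint (RectLat (μ : ℝ) (ν : ℝ)) (Dset ∪ Dprime) ↔
    ∃ m n : ℤ, 0 ≤ m ∧ 1 ≤ n ∧ (m : ℝ) / (μ : ℝ) + (n : ℝ) / (ν : ℝ) = 1 := by
  constructor
  · exact hard_direction μ ν hμ hν
  · exact easy_direction μ ν hμ hν
end

section
/- Let μ, ν > 0 be real numbers. Suppose at least one of the following conditions holds: (i) there exist integers m ≥ 0 and n ≥ 1 such that m/μ + n/ν = 1; (ii) there exist coprime integers p, q ≥ 1 such that μ/p = ν/q ≥ 1; (iii*) there exist coprime integers p, q ≥ 1 and integers m ≥ 0, n ≥ 1, r ≥ 1 such that μ/p = ν/q = 1 + (1/r)·(m/p + n/q − 1). Then ⌊(−ν/μ)⌊(−1/μ)x⌋⌋ ≥ ⌊(−1/μ)⌊(−ν/μ)x⌋⌋ holds for all real x. -/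
private lemma key_reduction (μ ν : ℝ) (hμ : 0 < μ) (hν : 0 < ν)
    (P : ∀ k ℓ j : ℤ, ν * k < μ * ℓ → μ * ℓ ≤ j → (j : ℝ) < ν * k + 1 → False) :
    ∀ x : ℝ, ⌊(-ν / μ) * (⌊(-1 / μ) * x⌋ : ℝ)⌋ ≥ ⌊(-1 / μ) * (⌊(-ν / μ) * x⌋ : ℝ)⌋ := by
  intro x
  by_contra hc
  push_neg at hc
  set t : ℝ := (-1 / μ) * x with ht
  have hxt : (-ν / μ) * x = ν * t := by rw [ht]; ring
  rw [hxt] at hc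
  refine P (-⌊t⌋) (⌊(-ν / μ) * (⌊t⌋ : ℝ)⌋ + 1) (-⌊ν * t⌋) ?_ ?_ ?_
  · have h1 : (-ν / μ) * (⌊t⌋ : ℝ) < (⌊(-ν / μ) * (⌊t⌋ : ℝ)⌋ : ℝ) + 1 :=
      Int.lt_floor_add_one _
    have e1 : ν * ((-⌊t⌋ : ℤ) : ℝ) = μ * ((-ν / μ) * (⌊t⌋ : ℝ)) := by
      push_cast; field_simp
    rw [e1]
    push_cast
    nlinarith [h1]
  · have h2 : ((⌊(-ν / μ) * (⌊t⌋ : ℝ)⌋ + 1 : ℤ) : ℝ) ≤ (-1 / μ) * (⌊ν * t⌋ : ℝ) := by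
      have : (⌊(-ν / μ) * (⌊t⌋ : ℝ)⌋ + 1 : ℤ) ≤ ⌊(-1 / μ) * (⌊ν * t⌋ : ℝ)⌋ := by omega
      calc ((⌊(-ν / μ) * (⌊t⌋ : ℝ)⌋ + 1 : ℤ) : ℝ) ≤ (⌊(-1 / μ) * (⌊ν * t⌋ : ℝ)⌋ : ℝ) := by
            exact_mod_cast this
        _ ≤ (-1 / μ) * (⌊ν * t⌋ : ℝ) := Int.floor_le _
    have e2 : μ * ((-1 / μ) * (⌊ν * t⌋ : ℝ)) = ((-⌊ν * t⌋ : ℤ) : ℝ) := by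
      push_cast; field_simp
    calc μ * ((⌊(-ν / μ) * (⌊t⌋ : ℝ)⌋ + 1 : ℤ) : ℝ) ≤ μ * ((-1 / μ) * (⌊ν * t⌋ : ℝ)) := by
          exact mul_le_mul_of_nonneg_left h2 hμ.le
      _ = ((-⌊ν * t⌋ : ℤ) : ℝ) := e2
  · have h3 : ν * (⌊t⌋ : ℝ) ≤ ν * t := mul_le_mul_of_nonneg_left (Int.floor_le t) hν.le
    have h4 : ν * t < (⌊ν * t⌋ : ℝ) + 1 := Int.lt_floor_add_one _
    push_cast
    linarith

private lemma case_one (μ ν : ℝ) (hμ : 0 < μ) (hν : 0 < ν) (m n : ℤ)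
    (hm : 0 ≤ m) (hn : 1 ≤ n) (hrel : (m : ℝ) / μ + (n : ℝ) / ν = 1) :
    ∀ k ℓ j : ℤ, ν * k < μ * ℓ → μ * ℓ ≤ j → (j : ℝ) < ν * k + 1 → False := by
  intro k ℓ j h1 h2 h3
  have hrel' : (m : ℝ) * ν + (n : ℝ) * μ = μ * ν := by
    field_simp at hrel; linarith
  have hm' : (0 : ℝ) ≤ (m : ℝ) := by exact_mod_cast hm
  have hn' : (1 : ℝ) ≤ (n : ℝ) := by exact_mod_cast hn
  have hμν : (0 : ℝ) < μ * ν := mul_pos hμ hν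
  -- z := m*ℓ + n*k satisfies j - 1 < z < j
  have hub : ((m * ℓ + n * k : ℤ) : ℝ) * (μ * ν) < (j : ℝ) * (μ * ν) := by
    push_cast
    have A : ((n:ℝ) * μ) * (ν * ↑k) < ((n:ℝ) * μ) * (μ * ↑ℓ) :=
      mul_lt_mul_of_pos_left h1 (by nlinarith : (0:ℝ) < (n:ℝ) * μ)
    have B : (μ * ν) * (μ * ↑ℓ) ≤ (μ * ν) * ↑j :=
      mul_le_mul_of_nonneg_left h2 hμν.le
    have E : ((m:ℝ) * ν + (n:ℝ) * μ) * (μ * ↑ℓ) = (μ * ν) * (μ * ↑ℓ) := by rw [hrel']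
    nlinarith [A, B, E]
  have hlb : ((j : ℝ) - 1) * (μ * ν) < ((m * ℓ + n * k : ℤ) : ℝ) * (μ * ν) := by
    push_cast
    have A : ((m:ℝ) * ν) * (ν * ↑k) ≤ ((m:ℝ) * ν) * (μ * ↑ℓ) :=
      mul_le_mul_of_nonneg_left h1.le (by positivity)
    have C : ((j:ℝ) - 1) * (μ * ν) < (ν * ↑k) * (μ * ν) :=
      mul_lt_mul_of_pos_right (by linarith) hμν
    have E : ((m:ℝ) * ν + (n:ℝ) * μ) * (ν * ↑k) = (μ * ν) * (ν * ↑k) := by rw [hrel']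
    nlinarith [A, C, E]
  have hub' : ((m * ℓ + n * k : ℤ) : ℝ) < (j : ℝ) := lt_of_mul_lt_mul_right hub hμν.le
  have hlb' : ((j : ℝ) - 1) < ((m * ℓ + n * k : ℤ) : ℝ) := lt_of_mul_lt_mul_right hlb hμν.le
  have i1 : m * ℓ + n * k < j := by exact_mod_cast hub'
  have i2 : j - 1 < m * ℓ + n * k := by exact_mod_cast hlb'
  omega

private lemma case_two (μ ν : ℝ) (hμ : 0 < μ) (hν : 0 < ν) (p q : ℤ)
    (hp : 1 ≤ p) (hq : 1 ≤ q) (heq : μ / (p : ℝ) = ν / (q : ℝ)) (hge : 1 ≤ μ / (p : ℝ)) :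
    ∀ k ℓ j : ℤ, ν * k < μ * ℓ → μ * ℓ ≤ j → (j : ℝ) < ν * k + 1 → False := by
  intro k ℓ j h1 h2 h3
  have hp' : (0 : ℝ) < (p : ℝ) := by exact_mod_cast hp.trans_lt' zero_lt_one
  have hq' : (0 : ℝ) < (q : ℝ) := by exact_mod_cast hq.trans_lt' zero_lt_one
  have hlam0 : (0 : ℝ) < μ / p := by positivity
  have e2 : ν * (k : ℝ) = μ / p * ((q : ℝ) * k) := by rw [heq]; field_simp
  have e1 : μ * (ℓ : ℝ) = μ / p * ((p : ℝ) * ℓ) := by field_simp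
  have hqk : (q : ℝ) * k < (p : ℝ) * ℓ := by
    have h1' := h1
    rw [e2, e1] at h1'
    exact lt_of_mul_lt_mul_left h1' hlam0.le
  have hqk' : q * k < p * ℓ := by exact_mod_cast hqk
  have hd'' : (1 : ℝ) ≤ (p : ℝ) * ℓ - (q : ℝ) * k := by
    have h5 : q * k + 1 ≤ p * ℓ := by omega
    have h6 : ((q * k + 1 : ℤ) : ℝ) ≤ ((p * ℓ : ℤ) : ℝ) := by exact_mod_cast h5
    push_cast at h6; linarith
  have hmul : (1 : ℝ) * 1 ≤ (μ / p) * ((p : ℝ) * ℓ - (q : ℝ) * k) :=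
    mul_le_mul hge hd'' zero_le_one hlam0.le
  nlinarith [e1, e2, hmul, h2, h3]

private lemma case_three (μ ν : ℝ) (hμ : 0 < μ) (hν : 0 < ν) (p q m n r : ℤ)
    (hp : 1 ≤ p) (hq : 1 ≤ q) (hm : 0 ≤ m) (hn : 1 ≤ n) (hr : 1 ≤ r)
    (heq : μ / (p : ℝ) = ν / (q : ℝ))
    (heq2 : μ / (p : ℝ) = 1 + (1 / (r : ℝ)) * ((m : ℝ) / (p : ℝ) + (n : ℝ) / (q : ℝ) - 1)) :
    ∀ k ℓ j : ℤ, ν * k < μ * ℓ → μ * ℓ ≤ j → (j : ℝ) < ν * k + 1 → False := by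
  intro k ℓ j h1 h2 h3
  have hp' : (0 : ℝ) < (p : ℝ) := by exact_mod_cast hp.trans_lt' zero_lt_one
  have hq' : (0 : ℝ) < (q : ℝ) := by exact_mod_cast hq.trans_lt' zero_lt_one
  have hr' : (0 : ℝ) < (r : ℝ) := by exact_mod_cast hr.trans_lt' zero_lt_one
  set N : ℤ := (r - 1) * p * q + m * q + n * p with hN
  -- μ = N/(r q), ν = N/(r p)
  have hμeq : μ * ((r : ℝ) * q) = (N : ℝ) := by
    have h4 := heq2
    field_simp at h4
    have hcancel : μ * ((r : ℝ) * q) * p = (N : ℝ) * p := by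
      push_cast [hN]; linear_combination (p:ℝ) * h4
    exact mul_right_cancel₀ (ne_of_gt hp') hcancel
  have hνeq : ν * ((r : ℝ) * p) = (N : ℝ) := by
    have heqq : μ * q = ν * p := by field_simp at heq; linarith
    have hcancel : ν * ((r : ℝ) * p) * q = (N : ℝ) * q := by
      linear_combination (-((r:ℝ) * q)) * heqq + (q:ℝ) * hμeq
    exact mul_right_cancel₀ (ne_of_gt hq') hcancel
  have hN0 : (0 : ℤ) < N := by
    have : (0 : ℝ) < (N : ℝ) := by rw [← hμeq]; positivity
    exact_mod_cast this
  -- integer inequalities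
  have ikq : k * q < ℓ * p := by
    have hr1 : (N : ℝ) * (k * q) < (N : ℝ) * (ℓ * p) := by
      have e1 : (N : ℝ) * (k * q) = (ν * k) * ((r:ℝ) * p * q) := by rw [← hνeq]; ring
      have e2 : (N : ℝ) * (ℓ * p) = (μ * ℓ) * ((r:ℝ) * p * q) := by rw [← hμeq]; ring
      rw [e1, e2]
      have hrpq : (0:ℝ) < (r:ℝ) * p * q := by positivity
      exact mul_lt_mul_of_pos_right h1 hrpq
    have hri : N * (k * q) < N * (ℓ * p) := by exact_mod_cast hr1
    exact lt_of_mul_lt_mul_left hri hN0.le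
  have iNl : N * ℓ ≤ r * q * j := by
    have hr2 : ((N * ℓ : ℤ) : ℝ) ≤ ((r * q * j : ℤ) : ℝ) := by
      push_cast
      have e1 : (N : ℝ) * ℓ = (μ * ℓ) * ((r:ℝ) * q) := by rw [← hμeq]; ring
      rw [e1]
      have : (μ * ℓ) * ((r:ℝ) * q) ≤ (j : ℝ) * ((r:ℝ) * q) := by
        apply mul_le_mul_of_nonneg_right h2 (by positivity)
      linarith [this]
    exact_mod_cast hr2
  have iNk : r * p * j < N * k + r * p := by
    have hr3 : ((r * p * j : ℤ) : ℝ) < ((N * k + r * p : ℤ) : ℝ) := by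
      push_cast
      have e1 : (N : ℝ) * k = (ν * k) * ((r:ℝ) * p) := by rw [← hνeq]; ring
      rw [e1]
      have := mul_lt_mul_of_pos_right h3 (show (0:ℝ) < (r:ℝ) * (p:ℝ) by positivity)
      nlinarith [this]
    exact_mod_cast hr3
  -- now pure integer contradiction
  set d : ℤ := ℓ * p - k * q with hdd
  have hd1 : 1 ≤ d := by omega
  set c : ℤ := r * q * j - N * ℓ with hcc
  have hc0 : 0 ≤ c := by omega
  set s : ℤ := r * j - (r - 1) * p * ℓ - m * ℓ - n * k with hss
  have hqs : q * s = c + n * d := by rw [hss, hcc, hdd, hN]; ring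
  have hs1 : 1 ≤ s := by
    have hnd : 1 ≤ n * d := by
      have := mul_le_mul hn hd1 zero_le_one (le_trans zero_le_one hn)
      linarith
    have hqs1 : 1 ≤ q * s := by omega
    by_contra hs
    push_neg at hs
    have : q * s ≤ 0 := mul_nonpos_iff.mpr (Or.inl ⟨by omega, by omega⟩)
    omega
  -- p*(Nℓ + c) = r p q j ≤ q*(Nk + rp - 1)
  have hid : N * d + p * c = q * (r * p * j) - q * (N * k) := by
    simp only [hdd, hcc]; ring
  have step : r * p * j ≤ N * k + r * p - 1 := by omega
  have step2 : q * (r * p * j) ≤ q * (N * k + r * p - 1) :=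
    mul_le_mul_of_nonneg_left step (by omega)
  have hfin : N * d + p * c ≤ r * p * q - q := by
    have : q * (N * k + r * p - 1) = q * (N * k) + r * p * q - q := by ring
    omega
  have hpq0 : (0 : ℤ) ≤ p * q := mul_nonneg (by omega) (by omega)
  have hid2 : N * d + p * c =
      (r - 1) * (p * q) + (d - 1) * ((r - 1) * (p * q)) + d * (m * q) + p * q
        + (s - 1) * (p * q) := by
    simp only [hN, hdd, hcc, hss]; ring
  have A : 0 ≤ (d - 1) * ((r - 1) * (p * q)) :=
    mul_nonneg (by omega) (mul_nonneg (by omega) hpq0)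
  have B : 0 ≤ (s - 1) * (p * q) := mul_nonneg (by omega) hpq0
  have C : 0 ≤ d * (m * q) := mul_nonneg (by omega) (mul_nonneg (by omega) (by omega))
  have hbig : r * p * q ≤ N * d + p * c := by
    have hrpq : r * p * q = (r - 1) * (p * q) + p * q := by ring
    linarith [hid2, A, B, C]
  omega


theorem negative_dilations_sufficiency (μ ν : ℝ) (hμ : 0 < μ) (hν : 0 < ν)
    (h : (∃ m n : ℤ, 0 ≤ m ∧ 1 ≤ n ∧ (m : ℝ) / μ + (n : ℝ) / ν = 1) ∨
         (∃ p q : ℤ, 1 ≤ p ∧ 1 ≤ q ∧ IsCoprime p q ∧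
            μ / (p : ℝ) = ν / (q : ℝ) ∧ 1 ≤ μ / (p : ℝ)) ∨
         (∃ p q m n r : ℤ, 1 ≤ p ∧ 1 ≤ q ∧ IsCoprime p q ∧ 0 ≤ m ∧ 1 ≤ n ∧ 1 ≤ r ∧
            μ / (p : ℝ) = ν / (q : ℝ) ∧
            μ / (p : ℝ) = 1 + (1 / (r : ℝ)) * ((m : ℝ) / (p : ℝ) + (n : ℝ) / (q : ℝ) - 1))) :
    ∀ x : ℝ, ⌊(-ν / μ) * (⌊(-1 / μ) * x⌋ : ℝ)⌋ ≥ ⌊(-1 / μ) * (⌊(-ν / μ) * x⌋ : ℝ)⌋ := by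
  apply key_reduction μ ν hμ hν
  rcases h with ⟨m, n, hm, hn, hrel⟩ | ⟨p, q, hp, hq, _, heq, hge⟩ |
    ⟨p, q, m, n, r, hp, hq, _, hm, hn, hr, heq, heq2⟩
  · exact case_one μ ν hμ hν m n hm hn hrel
  · exact case_two μ ν hμ hν p q hp hq heq hge
  · exact case_three μ ν hμ hν p q m n r hp hq hm hn hr heq heq2
end

section
/- Let μ, ν > 0 be real numbers. If (i) 1/μ + 1/ν = 1, or (ii) ν = 1, or (iii) μ = ν ≥ 1, then ⌊(−ν/μ)⌊(−1/μ)x⌋⌋ ≥ ⌊(−1/μ)⌊(−ν/μ)x⌋⌋ holds for all real x. -/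
lemma key_floor_lemma (γ : ℝ) (h0 : 0 < γ) (m n : ℤ)
    (hmn1 : γ * n - 1 < m) (hmn2 : (m : ℝ) < γ * (n + 1)) :
    ⌊(γ - 1) * (n : ℝ)⌋ ≤ ⌊(1 - 1/γ) * (m : ℝ)⌋ := by
  have hL : ⌊(γ - 1) * (n : ℝ)⌋ = ⌊γ * (n : ℝ)⌋ - n := by
    rw [sub_mul, one_mul, Int.floor_sub_intCast]
  have hR : ⌊(1 - 1/γ) * (m : ℝ)⌋ = m - ⌈(m : ℝ)/γ⌉ := by
    have : (1 - 1/γ) * (m : ℝ) = (m : ℝ) + (-( (m:ℝ)/γ)) := by ring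
    rw [this, Int.floor_intCast_add, Int.floor_neg]
    ring_nf
  rw [hL, hR]
  have h2 : ⌊γ * (n : ℝ)⌋ ≤ m := by
    have : ⌊γ * (n : ℝ)⌋ < m + 1 := by
      apply Int.floor_lt.mpr
      push_cast
      linarith
    omega
  have h3 : ⌈(m : ℝ)/γ⌉ ≤ n + 1 := by
    apply Int.ceil_le.mpr
    rw [div_le_iff₀ h0]
    push_cast
    nlinarith
  by_contra hc
  push_neg at hc
  have he1 : ⌊γ * (n : ℝ)⌋ = m := by omega
  have he2 : ⌈(m : ℝ)/γ⌉ = n + 1 := by omega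
  have hA : (m : ℝ) ≤ γ * n := by
    rw [← he1]; exact Int.floor_le _
  have hB : (n : ℝ) < (m : ℝ)/γ := by
    have : n < ⌈(m : ℝ)/γ⌉ := by omega
    exact_mod_cast Int.lt_ceil.mp this
  have : γ * (n : ℝ) < m := by
    rw [lt_div_iff₀ h0] at hB; linarith
  linarith

theorem hyperbola_halfline_sufficiency (μ ν : ℝ) (hμ : 0 < μ) (hν : 0 < ν)
    (h : 1 / μ + 1 / ν = 1 ∨ ν = 1 ∨ (μ = ν ∧ 1 ≤ μ)) :
    ∀ x : ℝ, ⌊(-ν / μ) * (⌊(-1 / μ) * x⌋ : ℝ)⌋ ≥ ⌊(-1 / μ) * (⌊(-ν / μ) * x⌋ : ℝ)⌋ := by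
  have hμ0 : μ ≠ 0 := ne_of_gt hμ
  have hν0 : ν ≠ 0 := ne_of_gt hν
  intro x
  rcases h with h | h | ⟨hmn, hge⟩
  · -- hyperbola case
    have h' : ν + μ = μ * ν := by
      field_simp at h
      linarith
    have hμ1 : 1 < μ := by
      by_contra hc
      push_neg at hc
      have h1 : 1 ≤ 1/μ := by rw [le_div_iff₀ hμ]; linarith
      have h2 : 0 < 1/ν := by positivity
      linarith
    set γ : ℝ := 1 - 1/μ with hγdef
    have hγ0 : 0 < γ := by
      have : 1/μ < 1 := by rw [div_lt_one hμ]; linarith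
      simp only [hγdef]; linarith
    have hγν : γ = 1/ν := by
      have h2 : (0:ℝ) < 1/ν := by positivity
      simp only [hγdef]; linarith
    have hα : -1/μ = γ - 1 := by
      simp only [hγdef]; ring
    have hβ : -ν/μ = 1 - 1/γ := by
      rw [hγν, one_div_one_div]
      field_simp
      linarith
    have hrel : γ * (-ν/μ) = -1/μ := by
      rw [hβ, hα]
      field_simp
    set m : ℤ := ⌊(-1/μ) * x⌋ with hmdef
    set n : ℤ := ⌊(-ν/μ) * x⌋ with hndef
    have hm1 : (m : ℝ) ≤ (-1/μ) * x := Int.floor_le _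
    have hm2 : (-1/μ) * x < m + 1 := Int.lt_floor_add_one _
    have hn1 : (n : ℝ) ≤ (-ν/μ) * x := Int.floor_le _
    have hn2 : (-ν/μ) * x < n + 1 := Int.lt_floor_add_one _
    clear_value γ m n
    have hmn2 : (m : ℝ) < γ * (n + 1) := by
      have := mul_lt_mul_of_pos_left hn2 hγ0
      rw [← mul_assoc, hrel] at this
      linarith
    have hmn1 : γ * n - 1 < m := by
      have := mul_le_mul_of_nonneg_left hn1 (le_of_lt hγ0)
      rw [← mul_assoc, hrel] at this
      linarith
    rw [hα, hβ]
    exact key_floor_lemma γ hγ0 m n hmn1 hmn2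
  · -- ν = 1
    subst h
    exact le_refl _
  · -- μ = ν, 1 ≤ μ
    subst hmn
    have hone : -μ/μ = -1 := by field_simp
    rw [hone]
    set m : ℤ := ⌊(-1/μ) * x⌋ with hmdef
    set n : ℤ := ⌊(-1 : ℝ) * x⌋ with hndef
    have hL : ⌊(-1 : ℝ) * (m : ℝ)⌋ = -m := by
      rw [neg_one_mul, Int.floor_neg, Int.ceil_intCast]
    rw [hL]
    have hm1 : (m : ℝ) ≤ (-1/μ) * x := Int.floor_le _
    have hn2 : (-1 : ℝ) * x < n + 1 := Int.lt_floor_add_one _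
    clear_value m n
    have hc : (0:ℝ) < 1/μ := by positivity
    have h1μ : 1/μ ≤ 1 := by rw [div_le_one hμ]; exact hge
    have hkey : (-1/μ) * (n : ℝ) < ((-m + 1 : ℤ) : ℝ) := by
      have hx : -x < (n : ℝ) + 1 := by linarith
      have e0 : 1/μ * -x < 1/μ * ((n : ℝ) + 1) := mul_lt_mul_of_pos_left hx hc
      have e1 : (m : ℝ) ≤ 1/μ * -x := by
        have : 1/μ * -x = -1/μ * x := by ring
        rw [this]; exact hm1
      have e2 : (m : ℝ) < 1/μ * ((n : ℝ) + 1) := lt_of_le_of_lt e1 e0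
      have e3 : (-1/μ) * (n : ℝ) = -(1/μ * (n : ℝ)) := by ring
      have e4 : 1/μ * ((n : ℝ) + 1) = 1/μ * (n : ℝ) + 1/μ := by ring
      rw [e3]
      push_cast
      linarith [e2, e4, h1μ]
    have := Int.floor_lt.mpr hkey
    omega
end

section
/- Let σ, τ > 0 be real numbers. Then ⌊(−σ/τ)⌊(−σ)x⌋⌋ ≥ ⌊(−σ)⌊(−σ/τ)x⌋⌋ holds for all real x if and only if for all integers n, k, l the point (nσ + k, nτ + l) does not lie in the modified corner rectangle C′_{σ,τ} = {(x,y) ∈ ℝ² : 0 ≤ x ≤ σ, 0 < y < τ, and x/σ ≠ y/τ}. (This expresses that the cyclic subgroup of the torus ℝ²/ℤ² generated by (σ, τ) mod ℤ² is disjoint from the projection of C′_{σ,τ} to the torus.) -/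
lemma aux_fail (σ τ : ℝ) (hσ : 0 < σ) (hτ : 0 < τ) (n k l : ℤ)
    (h1 : 0 ≤ (n : ℝ) * σ + (k : ℝ)) (h2 : (n : ℝ) * σ + (k : ℝ) ≤ σ)
    (h3 : 0 < (n : ℝ) * τ + (l : ℝ)) (h4 : (n : ℝ) * τ + (l : ℝ) < τ)
    (h5 : (k : ℝ) * τ < (l : ℝ) * σ) :
    ∃ x : ℝ, ⌊(-σ / τ) * (⌊(-σ) * x⌋ : ℝ)⌋ < ⌊(-σ) * (⌊(-σ / τ) * x⌋ : ℝ)⌋ := by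
  refine ⟨-(l : ℝ) / σ, ?_⟩
  have e1 : (-σ) * (-(l : ℝ) / σ) = (l : ℝ) := by field_simp
  have f1 : ⌊(-σ) * (-(l : ℝ) / σ)⌋ = l := by rw [e1]; exact Int.floor_intCast l
  have e2 : (-σ / τ) * (-(l : ℝ) / σ) = (l : ℝ) / τ := by field_simp
  have f2 : ⌊(-σ / τ) * (-(l : ℝ) / σ)⌋ = -n := by
    rw [e2, Int.floor_eq_iff]
    push_cast
    rw [le_div_iff₀ hτ, div_lt_iff₀ hτ]
    constructor <;> nlinarith
  rw [f1, f2]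
  have hL : ⌊(-σ / τ) * (l : ℝ)⌋ < -k := by
    rw [Int.floor_lt]
    push_cast
    have e3 : (-σ / τ) * (l : ℝ) = -(σ * l) / τ := by ring
    rw [e3, div_lt_iff₀ hτ]
    nlinarith
  have hR : -k ≤ ⌊(-σ) * ((-n : ℤ) : ℝ)⌋ := by
    rw [Int.le_floor]
    push_cast
    nlinarith
  exact lt_of_lt_of_le hL hR

theorem torus_subgroup_criterion (σ τ : ℝ) (hσ : 0 < σ) (hτ : 0 < τ) :
    (∀ x : ℝ, ⌊(-σ / τ) * (⌊(-σ) * x⌋ : ℝ)⌋ ≥ ⌊(-σ) * (⌊(-σ / τ) * x⌋ : ℝ)⌋) ↔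
    ∀ n k l : ℤ, ¬(0 ≤ (n : ℝ) * σ + (k : ℝ) ∧ (n : ℝ) * σ + (k : ℝ) ≤ σ ∧
        0 < (n : ℝ) * τ + (l : ℝ) ∧ (n : ℝ) * τ + (l : ℝ) < τ ∧
        ((n : ℝ) * σ + (k : ℝ)) / σ ≠ ((n : ℝ) * τ + (l : ℝ)) / τ) := by
  constructor
  · intro h n k l ⟨h1, h2, h3, h4, h5⟩
    rw [ne_eq, div_eq_div_iff hσ.ne' hτ.ne'] at h5
    have h5' : (k : ℝ) * τ ≠ (l : ℝ) * σ := by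
      intro he; exact h5 (by nlinarith)
    rcases h5'.lt_or_gt with hlt | hlt
    · obtain ⟨x, hx⟩ := aux_fail σ τ hσ hτ n k l h1 h2 h3 h4 hlt
      exact absurd (h x) hx.not_ge
    · obtain ⟨x, hx⟩ := aux_fail σ τ hσ hτ (1 - n) (-k) (-l)
        (by push_cast; nlinarith) (by push_cast; nlinarith)
        (by push_cast; nlinarith) (by push_cast; nlinarith)
        (by push_cast; nlinarith)
      exact absurd (h x) hx.not_ge
  · intro h x
    by_contra hc
    push_neg at hc
    set m := ⌊(-σ) * x⌋ with hm
    set p := ⌊(-σ / τ) * x⌋ with hp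
    set r := ⌊(-σ) * (p : ℝ)⌋ with hr
    have hm1 : (m : ℝ) ≤ -σ * x := Int.floor_le _
    have hm2 : -σ * x < m + 1 := Int.lt_floor_add_one _
    have hp1 : (p : ℝ) ≤ (-σ / τ) * x := Int.floor_le _
    have hp2 : (-σ / τ) * x < p + 1 := Int.lt_floor_add_one _
    have hr1 : (r : ℝ) ≤ -σ * p := Int.floor_le _
    have hr2 : (-σ / τ) * (m : ℝ) < r := Int.floor_lt.mp hc
    have key1 : -σ * m < r * τ := by
      rw [div_mul_eq_mul_div] at hr2
      have := (div_lt_iff₀ hτ).mp hr2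
      linarith
    have key2 : (m : ℝ) < (p + 1) * τ := by
      have h6 : -σ * x < (p + 1) * τ := by
        rw [div_mul_eq_mul_div, div_lt_iff₀ hτ] at hp2
        linarith
      linarith
    have key3 : (p : ℝ) * τ < m := by nlinarith
    refine h (-p) (-r) m ⟨?_, ?_, ?_, ?_, ?_⟩
    · push_cast; nlinarith
    · push_cast; nlinarith
    · push_cast; nlinarith
    · push_cast; nlinarith
    · push_cast
      rw [ne_eq, div_eq_div_iff hσ.ne' hτ.ne']
      intro he; nlinarith
end
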